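/- arXiv:2212.13953 — 7 statements merged into one kernel-verified Lean document; each statement's English description precedes it below -/
import Mathlib

section
/- If M is a complex-matrix-valued measure whose values are positive semidefinite d×d matrices, then for any i, j the total variation measure of the entry measure M_{ij} satisfies |M_{ij}|(ω) ≤ (M_{ii}(ω))^{1/2} · (M_{jj}(ω))^{1/2} for every measurable set ω. -/
/-!
Each value `M ω` is positive semidefinite, so its principal `2 × 2` minor on `{i, j}` gives
`|M_{ij}(ω)|² ≤ M_{ii}(ω) M_{jj}(ω)`. For a finite disjoint family `ω_k ⊆ ω`, the Cauchy–Schwarz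
inequality then bounds `∑ |M_{ij}(ω_k)|` by `(∑ M_{ii}(ω_k))^{1/2} (∑ M_{jj}(ω_k))^{1/2}`, and the
diagonal entries are nonnegative and additive, so `∑ M_{pp}(ω_k) ≤ M_{pp}(ω)`.
-/

open MeasureTheory Matrix
open scoped ComplexOrder

namespace Matrix.PosSemidef

variable {n 𝕜 : Type*} [RCLike 𝕜] {A : Matrix n n 𝕜}

theorem re_apply_self_nonneg (hA : A.PosSemidef) (i : n) : 0 ≤ RCLike.re (A i i) :=
  (RCLike.nonneg_iff.1 hA.diag_nonneg).1

theorem norm_apply_sq_le [Fintype n] (hA : A.PosSemidef) (i j : n) :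
    ‖A i j‖ ^ 2 ≤ RCLike.re (A i i) * RCLike.re (A j j) := by
  have hdet := (hA.submatrix ![i, j]).det_nonneg
  rw [det_fin_two] at hdet
  simp only [submatrix_apply, Matrix.cons_val_zero, Matrix.cons_val_one] at hdet
  rw [← hA.isHermitian.apply j i, RCLike.star_def, RCLike.mul_conj,
    ← hA.isHermitian.coe_re_apply_self i, ← hA.isHermitian.coe_re_apply_self j] at hdet
  exact_mod_cast sub_nonneg.1 hdet

theorem norm_apply_le_sqrt_mul_sqrt [Fintype n] (hA : A.PosSemidef) (i j : n) :
    ‖A i j‖ ≤ √(RCLike.re (A i i)) * √(RCLike.re (A j j)) := by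
  rw [← Real.sqrt_mul (hA.re_apply_self_nonneg i)]
  exact Real.le_sqrt_of_sq_le (hA.norm_apply_sq_le i j)

end Matrix.PosSemidef

namespace MeasureTheory.VectorMeasure

variable {Ω : Type*} [MeasurableSpace Ω]

section CountablyAdditive

variable {E : Type*} [AddCommGroup E] [TopologicalSpace E] [IsTopologicalAddGroup E] [T2Space E]

open Classical in
noncomputable def ofHasSum (μ : Set Ω → E)
    (hμ : ∀ s : ℕ → Set Ω, (∀ n, MeasurableSet (s n)) → Pairwise (Function.onFun Disjoint s) →
      HasSum (fun n => μ (s n)) (μ (⋃ n, s n))) : VectorMeasure Ω E where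
  measureOf' s := if MeasurableSet s then μ s else 0
  empty' := by
    have h := hμ (fun _ => ∅) (fun _ => .empty) fun _ _ _ => disjoint_bot_left
    rw [Set.iUnion_const] at h
    simp [(summable_const_iff _).1 h.summable]
  not_measurable' _ hs := if_neg hs
  m_iUnion' s hs hd := by
    simpa only [if_pos (hs _), if_pos (MeasurableSet.iUnion hs)] using hμ s hs hd

theorem ofHasSum_apply {μ : Set Ω → E}
    {hμ : ∀ s : ℕ → Set Ω, (∀ n, MeasurableSet (s n)) → Pairwise (Function.onFun Disjoint s) →
      HasSum (fun n => μ (s n)) (μ (⋃ n, s n))} {s : Set Ω} (hs : MeasurableSet s) :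
    ofHasSum μ hμ s = μ s :=
  if_pos hs

end CountablyAdditive

section FiniteFamily

variable {E ι : Type*} [AddCommMonoid E] [TopologicalSpace E] [T2Space E] [Fintype ι]

theorem sdiff_iUnion_add_sum (v : VectorMeasure Ω E) {s : ι → Set Ω} {t : Set Ω}
    (hs : ∀ k, MeasurableSet (s k)) (hd : Pairwise (Function.onFun Disjoint s))
    (ht : MeasurableSet t) (hst : ∀ k, s k ⊆ t) :
    v (t \ ⋃ k, s k) + ∑ k, v (s k) = v t := by
  rw [← v.of_add_of_sdiff (.iUnion hs) ht (Set.iUnion_subset hst), v.of_disjoint_iUnion hs hd,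
    tsum_fintype, add_comm]

theorem sum_re_apply_self_le {n 𝕜 : Type*} [RCLike 𝕜] (v : VectorMeasure Ω (Matrix n n 𝕜))
    (hv : ∀ s, MeasurableSet s → (v s).PosSemidef) {s : ι → Set Ω} {t : Set Ω}
    (hs : ∀ k, MeasurableSet (s k)) (hd : Pairwise (Function.onFun Disjoint s))
    (ht : MeasurableSet t) (hst : ∀ k, s k ⊆ t) (p : n) :
    ∑ k, RCLike.re (v (s k) p p) ≤ RCLike.re (v t p p) := by
  rw [← v.sdiff_iUnion_add_sum hs hd ht hst, Matrix.add_apply, Matrix.sum_apply,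
    _root_.map_add, _root_.map_sum, le_add_iff_nonneg_left]
  exact (hv _ (ht.diff (.iUnion hs))).re_apply_self_nonneg p

end FiniteFamily

end MeasureTheory.VectorMeasure

/-- For a matrix measure `M` (positive-semidefinite-valued, countably
additive), the total variation of the entry measure `M_{ij}` satisfies
`|M_{ij}|(ω) ≤ (M_{ii}(ω))^{1/2} (M_{jj}(ω))^{1/2}`; the total variation on `ω` is the
supremum of `∑ |M_{ij}(ω_s)|` over finite disjoint measurable families inside `ω`. -/
theorem entry_variation_le_sqrt_diag
    {Ω : Type*} [MeasurableSpace Ω] {d : ℕ}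
    (M : Set Ω → Matrix (Fin d) (Fin d) ℂ)
    (hadd : ∀ s : ℕ → Set Ω, (∀ n, MeasurableSet (s n)) → Pairwise (Function.onFun Disjoint s) →
      HasSum (fun n => M (s n)) (M (⋃ n, s n)))
    (hpos : ∀ ω : Set Ω, MeasurableSet ω → (M ω).PosSemidef)
    (i j : Fin d) (ω : Set Ω) (hω : MeasurableSet ω) :
    sSup {r : ℝ | ∃ (n : ℕ) (s : Fin n → Set Ω),
        (∀ k, MeasurableSet (s k)) ∧ (∀ k, s k ⊆ ω) ∧ Pairwise (Function.onFun Disjoint s) ∧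
        r = ∑ k, ‖M (s k) i j‖} ≤
      Real.sqrt ((M ω i i).re) * Real.sqrt ((M ω j j).re) := by
  set v := VectorMeasure.ofHasSum M hadd
  have hvM {s : Set Ω} (hs : MeasurableSet s) : v s = M s := VectorMeasure.ofHasSum_apply hs
  refine Real.sSup_le ?_ (by positivity)
  rintro _ ⟨n, s, hs, hsω, hd, rfl⟩
  have hdiag (p : Fin d) : ∑ k, (M (s k) p p).re ≤ (M ω p p).re := by
    have h := v.sum_re_apply_self_le (fun t ht => hvM ht ▸ hpos t ht) hs hd hω hsω p
    simpa only [hvM (hs _), hvM hω, RCLike.re_to_complex] using h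
  calc ∑ k, ‖M (s k) i j‖
      ≤ ∑ k, √(M (s k) i i).re * √(M (s k) j j).re :=
        Finset.sum_le_sum fun k _ => (hpos _ (hs k)).norm_apply_le_sqrt_mul_sqrt i j
    _ ≤ √(∑ k, (M (s k) i i).re) * √(∑ k, (M (s k) j j).re) :=
        Real.sum_sqrt_mul_sqrt_le _ (fun k => (hpos _ (hs k)).re_apply_self_nonneg i)
          fun k => (hpos _ (hs k)).re_apply_self_nonneg j
    _ ≤ √(M ω i i).re * √(M ω j j).re := by
        gcongr <;> exact hdiag _
end

section
/- Generalized Schwarz inequality: suppose μ, μ₁, μ₂ are measures on a σ-algebra 𝔐 with μ(ω) ≤ (μ₁(ω) μ₂(ω))^{1/2} for every ω ∈ 𝔐. If f₁ ∈ L²(μ₁) and f₂ ∈ L²(μ₂), then f₁·f₂ ∈ L¹(μ) and ∫ |f₁ f₂| dμ ≤ (∫ |f₁|² dμ₁)^{1/2} · (∫ |f₂|² dμ₂)^{1/2}. -/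
/-!
On the fibres `Eᵢ` of a pair of simple functions with values `aᵢ`, `bᵢ`, the hypothesis
`μ ≤ μ₁ ^ (1/p) μ₂ ^ (1/q)` bounds `∑ aᵢ bᵢ μ(Eᵢ)` by `∑ (aᵢ^p μ₁(Eᵢ))^(1/p) (bᵢ^q μ₂(Eᵢ))^(1/q)`,
and the finite Hölder inequality bounds this by `‖a‖_{L^p(μ₁)} ‖b‖_{L^q(μ₂)}`. Monotone
convergence along simple approximations extends the bound to all measurable functions;
`p = q = 2` applied to `‖f₁‖`, `‖f₂‖` is the Schwarz inequality.
-/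

open MeasureTheory ENNReal

namespace ENNReal

theorem iSup_mul_iSup_of_monotone {ι : Type*} [Preorder ι] [IsDirectedOrder ι]
    {f g : ι → ℝ≥0∞} (hf : Monotone f) (hg : Monotone g) :
    iSup f * iSup g = ⨆ i, f i * g i := by
  refine le_antisymm ?_ (iSup_le fun i => mul_le_mul' (le_iSup f i) (le_iSup g i))
  rw [ENNReal.iSup_mul]
  refine iSup_le fun i => ?_
  rw [ENNReal.mul_iSup]
  refine iSup_le fun j => ?_
  obtain ⟨k, hik, hjk⟩ := exists_ge_ge i j
  exact le_iSup_of_le k (mul_le_mul' (hf hik) (hg hjk))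

theorem rpow_mul_rpow_one_div {p : ℝ} (hp : 0 < p) (a m : ℝ≥0∞) :
    (a ^ p * m) ^ (1 / p) = a * m ^ (1 / p) := by
  rw [mul_rpow_of_nonneg _ _ (one_div_pos.2 hp).le, one_div, rpow_rpow_inv hp.ne']

end ENNReal

namespace MeasureTheory

variable {Ω : Type*} [MeasurableSpace Ω] {μ μ₁ μ₂ : Measure Ω} {p q : ℝ}

theorem SimpleFunc.lintegral_comp_eq_sum {β : Type*} (φ : β → ℝ≥0∞) (f : SimpleFunc Ω β) :
    ∫⁻ x, φ (f x) ∂μ = ∑ z ∈ f.range, φ z * μ (f ⁻¹' {z}) := by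
  rw [← map_lintegral, ← lintegral_eq_lintegral]
  rfl

theorem SimpleFunc.lintegral_mul_le_Lp_mul_Lq_of_measure_le (hpq : p.HolderConjugate q)
    (h : ∀ s, MeasurableSet s → μ s ≤ μ₁ s ^ (1 / p) * μ₂ s ^ (1 / q)) (f g : SimpleFunc Ω ℝ≥0∞) :
    ∫⁻ x, f x * g x ∂μ ≤
      (∫⁻ x, f x ^ p ∂μ₁) ^ (1 / p) * (∫⁻ x, g x ^ q ∂μ₂) ^ (1 / q) := by
  set P := f.pair g
  let F : ℝ≥0∞ × ℝ≥0∞ → ℝ≥0∞ := fun z => (z.1 ^ p * μ₁ (P ⁻¹' {z})) ^ (1 / p)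
  let G : ℝ≥0∞ × ℝ≥0∞ → ℝ≥0∞ := fun z => (z.2 ^ q * μ₂ (P ⁻¹' {z})) ^ (1 / q)
  have hF : ∀ z, F z ^ p = z.1 ^ p * μ₁ (P ⁻¹' {z}) := fun z => by
    dsimp only [F]; rw [one_div, rpow_inv_rpow hpq.ne_zero]
  have hG : ∀ z, G z ^ q = z.2 ^ q * μ₂ (P ⁻¹' {z}) := fun z => by
    dsimp only [G]; rw [one_div, rpow_inv_rpow hpq.symm.ne_zero]
  calc ∫⁻ x, f x * g x ∂μ
      = ∑ z ∈ P.range, z.1 * z.2 * μ (P ⁻¹' {z}) :=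
        SimpleFunc.lintegral_comp_eq_sum (fun z => z.1 * z.2) P
    _ ≤ ∑ z ∈ P.range, F z * G z := by
        refine Finset.sum_le_sum fun z _ => ?_
        calc z.1 * z.2 * μ (P ⁻¹' {z})
            ≤ z.1 * z.2 * (μ₁ (P ⁻¹' {z}) ^ (1 / p) * μ₂ (P ⁻¹' {z}) ^ (1 / q)) := by
              gcongr
              exact h _ (P.measurableSet_fiber z)
          _ = F z * G z := by
              simp only [F, G, rpow_mul_rpow_one_div hpq.pos, rpow_mul_rpow_one_div hpq.symm.pos]
              ring
    _ ≤ (∑ z ∈ P.range, F z ^ p) ^ (1 / p) * (∑ z ∈ P.range, G z ^ q) ^ (1 / q) :=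
        inner_le_Lp_mul_Lq _ _ _ hpq
    _ = (∫⁻ x, f x ^ p ∂μ₁) ^ (1 / p) * (∫⁻ x, g x ^ q ∂μ₂) ^ (1 / q) := by
        simp only [hF, hG]
        rw [← SimpleFunc.lintegral_comp_eq_sum (fun z => z.1 ^ p) P,
          ← SimpleFunc.lintegral_comp_eq_sum (fun z => z.2 ^ q) P]
        rfl

open SimpleFunc in
theorem lintegral_mul_le_Lp_mul_Lq_of_measure_le (hpq : p.HolderConjugate q)
    (h : ∀ s, MeasurableSet s → μ s ≤ μ₁ s ^ (1 / p) * μ₂ s ^ (1 / q))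
    {f g : Ω → ℝ≥0∞} (hf : Measurable f) (hg : Measurable g) :
    ∫⁻ x, f x * g x ∂μ ≤
      (∫⁻ x, f x ^ p ∂μ₁) ^ (1 / p) * (∫⁻ x, g x ^ q ∂μ₂) ^ (1 / q) := by
  have eapprox_norm_le {F : Ω → ℝ≥0∞} (hF : Measurable F) {r : ℝ} (hr : 0 ≤ r) (ν : Measure Ω) n :
      (∫⁻ x, eapprox F n x ^ r ∂ν) ^ (1 / r) ≤ (∫⁻ x, F x ^ r ∂ν) ^ (1 / r) := by
    refine rpow_le_rpow (lintegral_mono fun x => rpow_le_rpow ?_ hr) (one_div_nonneg.2 hr)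
    exact (le_iSup (fun n => eapprox F n x) n).trans_eq (iSup_eapprox_apply hF x)
  have mul_eq_iSup x : f x * g x = ⨆ n, eapprox f n x * eapprox g n x := by
    rw [← iSup_mul_iSup_of_monotone (fun _ _ hmn => monotone_eapprox f hmn x)
      (fun _ _ hmn => monotone_eapprox g hmn x), iSup_eapprox_apply hf, iSup_eapprox_apply hg]
  calc ∫⁻ x, f x * g x ∂μ
      = ⨆ n, ∫⁻ x, eapprox f n x * eapprox g n x ∂μ := by
        simp_rw [mul_eq_iSup]
        exact lintegral_iSup (fun n => (eapprox f n).measurable.mul (eapprox g n).measurable)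
          fun _ _ hmn x => mul_le_mul' (monotone_eapprox f hmn x) (monotone_eapprox g hmn x)
    _ ≤ _ := iSup_le fun n =>
        (SimpleFunc.lintegral_mul_le_Lp_mul_Lq_of_measure_le hpq h _ _).trans <|
          mul_le_mul' (eapprox_norm_le hf hpq.nonneg μ₁ n) (eapprox_norm_le hg hpq.symm.nonneg μ₂ n)

theorem MemLp.sqrt_integral_norm_sq_eq_toReal_eLpNorm {E : Type*} [NormedAddCommGroup E]
    {f : Ω → E} (hf : MemLp f 2 μ) : √(∫ x, ‖f x‖ ^ 2 ∂μ) = (eLpNorm f 2 μ).toReal := by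
  rw [hf.eLpNorm_eq_integral_rpow_norm two_ne_zero ofNat_ne_top, toReal_ofReal (by positivity),
    Real.sqrt_eq_rpow]
  norm_num

end MeasureTheory

/-- Generalized Schwarz inequality. If `μ ω ≤ (μ₁ ω · μ₂ ω)^{1/2}` for all
measurable `ω`, `f₁ ∈ L²(μ₁)` and `f₂ ∈ L²(μ₂)`, then `f₁ f₂ ∈ L¹(μ)` and
`∫ |f₁ f₂| dμ ≤ (∫ |f₁|² dμ₁)^{1/2} (∫ |f₂|² dμ₂)^{1/2}`. -/
theorem generalized_schwarz_inequality
    {Ω : Type*} [MeasurableSpace Ω]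
    (μ μ₁ μ₂ : Measure Ω)
    (h : ∀ ω : Set Ω, MeasurableSet ω → μ ω ≤ (μ₁ ω * μ₂ ω) ^ (1 / 2 : ℝ))
    (f₁ f₂ : Ω → ℂ) (h₁ : Measurable f₁) (h₂ : Measurable f₂)
    (hf₁ : MemLp f₁ 2 μ₁) (hf₂ : MemLp f₂ 2 μ₂) :
    Integrable (fun t => f₁ t * f₂ t) μ ∧
      ∫ t, ‖f₁ t * f₂ t‖ ∂μ ≤
        Real.sqrt (∫ t, ‖f₁ t‖ ^ 2 ∂μ₁) * Real.sqrt (∫ t, ‖f₂ t‖ ^ 2 ∂μ₂) := by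
  have hμ s (hs : MeasurableSet s) : μ s ≤ μ₁ s ^ (1 / 2 : ℝ) * μ₂ s ^ (1 / 2 : ℝ) :=
    (h s hs).trans_eq (mul_rpow_of_nonneg _ _ (by norm_num))
  have hle : ∫⁻ t, ‖f₁ t * f₂ t‖ₑ ∂μ ≤ eLpNorm f₁ 2 μ₁ * eLpNorm f₂ 2 μ₂ := by
    simp only [enorm_mul, eLpNorm_eq_lintegral_rpow_enorm_toReal two_ne_zero ofNat_ne_top,
      toReal_ofNat]
    exact lintegral_mul_le_Lp_mul_Lq_of_measure_le Real.HolderConjugate.two_two hμ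
      h₁.enorm h₂.enorm
  have hint : Integrable (fun t => f₁ t * f₂ t) μ :=
    ⟨(h₁.mul h₂).aestronglyMeasurable, hle.trans_lt (mul_lt_top hf₁.2 hf₂.2)⟩
  refine ⟨hint, ?_⟩
  rw [integral_norm_eq_lintegral_enorm hint.1, hf₁.sqrt_integral_norm_sq_eq_toReal_eLpNorm,
    hf₂.sqrt_integral_norm_sq_eq_toReal_eLpNorm, ← toReal_mul]
  exact toReal_mono (mul_ne_top hf₁.2.ne hf₂.2.ne) hle
end

section
/- Let f : J → ℂ be continuous on an interval J ⊆ ℝ. The continuous functional calculus map A ↦ f(A), defined on the set of bounded self-adjoint operators A on a Hilbert space with σ(A) ⊆ J, is continuous with respect to the operator norm. -/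
/-!
`ContinuousOn.cfc` reduces continuity of `A ↦ f(A)` to a local confinement of spectra: near each
`A₀`, the spectra must stay in one compact set on which `f` is continuous. By upper
hemicontinuity of the spectrum, nearby spectra lie in any open neighbourhood of `σ(A₀)`; since
they also lie in `J`, it suffices that some open `U ⊇ σ(A₀)` has `U ∩ J` inside a compact
interval `[a, b] ⊆ J`, which holds because `J` is an interval.
-/

open Set Filter Topology

section OrdConnected

variable {α : Type*} [LinearOrder α] [TopologicalSpace α] [OrderTopology α] {J : Set α}

lemma exists_isOpen_Ici_subset_inter_subset_Ici {m : α} (hm : m ∈ J) :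
    ∃ a ∈ J, ∃ V, IsOpen V ∧ Ici m ⊆ V ∧ V ∩ J ⊆ Ici a := by
  by_cases h : ∃ y ∈ J, y < m
  · obtain ⟨y, hyJ, hym⟩ := h
    exact ⟨y, hyJ, Ioi y, isOpen_Ioi, Ici_subset_Ioi.mpr hym, fun t ht => le_of_lt ht.1⟩
  · push Not at h
    exact ⟨m, hm, univ, isOpen_univ, subset_univ _, fun t ht => h t ht.2⟩

lemma Set.OrdConnected.exists_isCompact_isOpen_inter_subset [CompactIccSpace α]
    (hJ : J.OrdConnected) {K : Set α} (hK : IsCompact K) (hKJ : K ⊆ J) :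
    ∃ L U, IsCompact L ∧ L ⊆ J ∧ IsOpen U ∧ K ⊆ U ∧ U ∩ J ⊆ L := by
  rcases K.eq_empty_or_nonempty with rfl | hne
  · exact ⟨∅, ∅, isCompact_empty, empty_subset _, isOpen_empty, subset_rfl, inter_subset_left⟩
  obtain ⟨m, hmK, hm⟩ := hK.exists_isLeast hne
  obtain ⟨M, hMK, hM⟩ := hK.exists_isGreatest hne
  obtain ⟨a, haJ, V, hV, hmV, hVa⟩ := exists_isOpen_Ici_subset_inter_subset_Ici (hKJ hmK)
  obtain ⟨b, hbJ, W, hW, hMW, hWb⟩ :=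
    exists_isOpen_Ici_subset_inter_subset_Ici (α := αᵒᵈ) (J := J) (hKJ hMK)
  refine ⟨Icc a b, V ∩ W, isCompact_Icc, hJ.out haJ hbJ, hV.inter hW,
    fun x hx => ⟨hmV (hm hx), hMW (hM hx)⟩,
    fun t ht => ⟨hVa ⟨ht.1.1, ht.2⟩, hWb ⟨ht.1.2, ht.2⟩⟩⟩

end OrdConnected

lemma IsSelfAdjoint.spectrum_subset_ofReal_image_iff {A : Type*} [CStarAlgebra A] {a : A}
    (ha : IsSelfAdjoint a) {J : Set ℝ} :
    spectrum ℂ a ⊆ Complex.ofReal '' J ↔ spectrum ℝ a ⊆ J := by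
  rw [← ha.spectrumRestricts.algebraMap_image]
  exact image_subset_image_iff Complex.ofReal_injective

lemma IsSelfAdjoint.exists_isCompact_eventually_spectrum_inter_subset {A : Type*}
    [CStarAlgebra A] {a : A} (ha : IsSelfAdjoint a) {J : Set ℝ} (hJ : J.OrdConnected)
    (haJ : spectrum ℂ a ⊆ Complex.ofReal '' J) :
    ∃ L, IsCompact L ∧ L ⊆ J ∧
      ∀ᶠ b in 𝓝 a, spectrum ℂ b ∩ Complex.ofReal '' J ⊆ Complex.ofReal '' L := by
  obtain ⟨L, U, hL, hLJ, hU, haU, hUJ⟩ :=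
    hJ.exists_isCompact_isOpen_inter_subset (spectrum.isCompact a)
      (ha.spectrum_subset_ofReal_image_iff.mp haJ)
  have hσU : spectrum ℂ a ⊆ Complex.re ⁻¹' U := by
    rw [← ha.spectrumRestricts.algebraMap_image]
    rintro _ ⟨t, ht, rfl⟩
    exact haU ht
  refine ⟨L, hL, hLJ, ?_⟩
  filter_upwards [upperHemicontinuousAt_iff_forall_isOpen.mp
    ((upperHemicontinuous_spectrum ℂ A).upperHemicontinuousAt a) _
    (hU.preimage Complex.continuous_re) hσU] with b hb
  rintro _ ⟨hz, t, ht, rfl⟩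
  exact ⟨t, hUJ ⟨by simpa using hb hz, ht⟩, rfl⟩

theorem cfc_continuousOn_selfAdjoint_spectrum_subset_general
    {H : Type*} [NormedAddCommGroup H] [InnerProductSpace ℂ H] [CompleteSpace H]
    (J : Set ℝ) (hJ : Convex ℝ J)
    (f : ℂ → ℂ) (hf : ContinuousOn f (Complex.ofReal '' J)) :
    ContinuousOn (fun A : H →L[ℂ] H => cfc f A)
      {A : H →L[ℂ] H | IsSelfAdjoint A ∧ spectrum ℂ A ⊆ Complex.ofReal '' J} := by
  choose! L hLc hLJ hLA using
    fun (A : H →L[ℂ] H) (hA : IsSelfAdjoint A ∧ spectrum ℂ A ⊆ Complex.ofReal '' J) =>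
      hA.1.exists_isCompact_eventually_spectrum_inter_subset hJ.ordConnected hA.2
  refine ContinuousOn.cfc (s := fun A => Complex.ofReal '' L A) f
    (fun A hA => (hLc A hA).image Complex.continuous_ofReal) continuousOn_id (fun A hA => ?_)
    (fun A hA => hA.1.isStarNormal) (fun A hA => hf.mono (image_mono (hLJ A hA)))
  filter_upwards [nhdsWithin_le_nhds (hLA A hA), self_mem_nhdsWithin] with B hB hBJ
  exact fun z hz => hB ⟨hz, hBJ.2 hz⟩

/-- For a continuous `f` on an interval (convex subset) `J ⊆ ℝ`, the
continuous functional calculus `A ↦ f(A)`, defined on the set of bounded self-adjoint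
operators on a complex Hilbert space with spectrum contained in `J`, is continuous in the
operator norm (in the subspace topology). -/
theorem cfc_continuousOn_selfAdjoint_spectrum_subset
    {H : Type*} [NormedAddCommGroup H] [InnerProductSpace ℂ H] [CompleteSpace H]
    (J : Set ℝ) (hJ : Convex ℝ J) (hJne : J.Nonempty)
    (f : ℂ → ℂ) (hf : ContinuousOn f (Complex.ofReal '' J)) :
    ContinuousOn (fun A : H →L[ℂ] H => cfc f A)
      {A : H →L[ℂ] H | IsSelfAdjoint A ∧ spectrum ℂ A ⊆ Complex.ofReal '' J} :=
  cfc_continuousOn_selfAdjoint_spectrum_subset_general J hJ f hf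
end

section
/- If A : Ω → Mat_d(ℂ) and f : Ω → ℂ^d are measurable functions (with respect to a σ-algebra 𝔐 on Ω and Borel σ-algebras on the targets), then the set {t ∈ Ω : f(t) ∈ Ran A(t)} is measurable. -/
open Matrix Polynomial
open scoped ComplexOrder

theorem aux_star_dot {d : ℕ} {w : Fin d → ℂ} (h : star w ⬝ᵥ w = 0) : w = 0 := by
  have h2 : ((∑ i, Complex.normSq (w i) : ℝ) : ℂ) = 0 := by
    rw [← h]; push_cast
    simp [dotProduct, Complex.normSq_eq_conj_mul_self, RCLike.star_def]
  have h3 : ∑ i, Complex.normSq (w i) = 0 := by exact_mod_cast h2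
  funext i
  have := (Finset.sum_eq_zero_iff_of_nonneg (fun i _ => Complex.normSq_nonneg (w i))).mp h3 i (Finset.mem_univ i)
  simpa using Complex.normSq_eq_zero.mp this

theorem aux_ker_sq {d : ℕ} (M : Matrix (Fin d) (Fin d) ℂ) (hM : Mᴴ = M) (x : Fin d → ℂ)
    (h : (M * M) *ᵥ x = 0) : M *ᵥ x = 0 := by
  apply aux_star_dot
  rw [star_mulVec, hM, dotProduct_mulVec, vecMul_vecMul, ← dotProduct_mulVec, h, dotProduct_zero]

theorem aux_ker_pow {d : ℕ} (M : Matrix (Fin d) (Fin d) ℂ) (hM : Mᴴ = M) (x : Fin d → ℂ)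
    (n : ℕ) (h : M ^ (n + 1) *ᵥ x = 0) : M *ᵥ x = 0 := by
  induction n with
  | zero => simpa using h
  | succ n ih =>
    apply ih
    have h2 : (M * M) *ᵥ (M ^ n *ᵥ x) = 0 := by
      rw [mulVec_mulVec]
      rw [mul_assoc, ← pow_succ', ← pow_succ']
      exact h
    have := aux_ker_sq M hM _ h2
    rw [mulVec_mulVec, ← pow_succ'] at this
    exact this

theorem aux_key {d : ℕ} (M : Matrix (Fin d) (Fin d) ℂ) (hM : Mᴴ = M) (f : Fin d → ℂ) (s : ℕ)
    (h0 : ∀ i < s, M.charpoly.coeff i = 0) (hs : M.charpoly.coeff s ≠ 0) :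
    (∃ v, M *ᵥ v = f) ↔
      (∑ i ∈ Finset.Icc s d, M.charpoly.coeff i • M ^ (i - s)) *ᵥ f = 0 := by
  set c : ℕ → ℂ := fun i => M.charpoly.coeff i with hc
  set Q : Matrix (Fin d) (Fin d) ℂ := ∑ i ∈ Finset.Icc s d, c i • M ^ (i - s) with hQ
  have hdeg : M.charpoly.natDegree = d := by simpa using Matrix.charpoly_natDegree_eq_dim M
  have hsd : s ≤ d := hdeg ▸ le_natDegree_of_ne_zero hs
  have hMQ : M ^ s * Q = 0 := by
    have h1 : M ^ s * Q = ∑ i ∈ Finset.Icc s d, c i • M ^ i := by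
      rw [hQ, Finset.mul_sum]
      refine Finset.sum_congr rfl fun i hi => ?_
      rw [mul_smul_comm, ← pow_add, Nat.add_sub_cancel' (Finset.mem_Icc.mp hi).1]
    have h2 : (0 : Matrix (Fin d) (Fin d) ℂ) = aeval M M.charpoly :=
      (Matrix.aeval_self_charpoly M).symm
    rw [h1, h2, aeval_eq_sum_range' (n := d + 1) (by omega) M]
    refine Finset.sum_subset ?_ ?_
    · intro i hi
      exact Finset.mem_range.mpr (Nat.lt_succ_of_le (Finset.mem_Icc.mp hi).2)
    · intro i hi hni
      have hlt : i < s := by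
        have h1 := Finset.mem_range.mp hi
        rcases Nat.lt_or_ge i s with h | h
        · exact h
        · exact absurd (Finset.mem_Icc.mpr ⟨h, by omega⟩) hni
      show M.charpoly.coeff i • M ^ i = 0
      rw [h0 i hlt, zero_smul]
  have hcomm : Q * M = M * Q := by
    have : Commute M Q := by
      apply Commute.sum_right
      intro i _
      exact (((Commute.refl M).pow_right _).smul_right _)
    exact this.symm
  have hdecomp : Q = c s • 1 + M * (∑ i ∈ Finset.Icc (s+1) d, c i • M ^ (i - (s+1))) := by
    rw [hQ, ← Finset.Ioc_insert_left hsd, Finset.sum_insert (by simp), Nat.sub_self, pow_zero,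
      Finset.mul_sum, ← Finset.Icc_add_one_left_eq_Ioc]
    congr 1
    refine Finset.sum_congr rfl fun i hi => ?_
    have h1 : s + 1 ≤ i := (Finset.mem_Icc.mp hi).1
    rw [mul_smul_comm, ← pow_succ']
    congr 2
    omega
  constructor
  · rintro ⟨u, rfl⟩
    have h3 : M ^ (s + 1) *ᵥ (Q *ᵥ u) = 0 := by
      rw [mulVec_mulVec, pow_succ', mul_assoc, hMQ, mul_zero, zero_mulVec]
    have h4 := aux_ker_pow M hM _ s h3
    rw [mulVec_mulVec] at h4 ⊢
    rw [← hcomm] at h4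
    exact h4
  · intro h
    rw [hdecomp, add_mulVec, smul_mulVec, one_mulVec, ← mulVec_mulVec] at h
    set g := (∑ i ∈ Finset.Icc (s+1) d, c i • M ^ (i - (s+1))) *ᵥ f
    refine ⟨(-(c s)⁻¹) • g, ?_⟩
    have h5 : M *ᵥ g = -(c s • f) := by
      rw [eq_neg_iff_add_eq_zero, add_comm]; exact h
    rw [mulVec_smul, h5]
    rw [smul_neg, neg_smul, neg_neg, smul_smul, inv_mul_cancel₀ hs, one_smul]

theorem aux_range_eq {d : ℕ} (A : Matrix (Fin d) (Fin d) ℂ) (f : Fin d → ℂ) :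
    (∃ v, A *ᵥ v = f) ↔ (∃ u, (A * Aᴴ) *ᵥ u = f) := by
  have hle : LinearMap.range (A * Aᴴ).mulVecLin ≤ LinearMap.range A.mulVecLin := by
    rw [mulVecLin_mul]
    exact LinearMap.range_comp_le_range _ _
  have heq : LinearMap.range (A * Aᴴ).mulVecLin = LinearMap.range A.mulVecLin := by
    apply Submodule.eq_of_le_of_finrank_le hle
    have := Matrix.rank_self_mul_conjTranspose A
    rw [Matrix.rank, Matrix.rank] at this
    omega
  constructor
  · rintro ⟨v, rfl⟩
    have : A *ᵥ v ∈ LinearMap.range A.mulVecLin := ⟨v, rfl⟩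
    rw [← heq] at this
    obtain ⟨u, hu⟩ := this
    exact ⟨u, hu⟩
  · rintro ⟨u, rfl⟩
    exact ⟨Aᴴ *ᵥ u, by rw [mulVec_mulVec]⟩

theorem aux_meas_det {Ω : Type*} [MeasurableSpace Ω] {d : ℕ} (N : Ω → Matrix (Fin d) (Fin d) ℂ)
    (hN : ∀ i j, Measurable fun t => N t i j) : Measurable fun t => (N t).det := by
  simp_rw [Matrix.det_apply']
  apply Finset.measurable_sum
  intro σ _
  apply Measurable.const_mul
  exact Finset.measurable_prod _ fun i _ => hN (σ i) i

theorem aux_eval_charpoly {d : ℕ} (N : Matrix (Fin d) (Fin d) ℂ) (x : ℂ) :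
    (N.charpoly).eval x = (x • (1 : Matrix (Fin d) (Fin d) ℂ) - N).det := by
  rw [Matrix.charpoly]
  rw [show (charmatrix N).det.eval x = (evalRingHom x) (charmatrix N).det from rfl]
  rw [RingHom.map_det]
  congr 1
  ext i j
  by_cases h : i = j
  · subst h
    simp [charmatrix_apply_eq, Matrix.map_apply, Matrix.one_apply, Matrix.smul_apply]
  · simp [charmatrix_apply_ne _ _ _ h, Matrix.map_apply, Matrix.one_apply_ne h, h,
      Matrix.smul_apply]

theorem aux_meas_coeff {Ω : Type*} [MeasurableSpace Ω] {d : ℕ}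
    (N : Ω → Matrix (Fin d) (Fin d) ℂ)
    (hN : ∀ i j, Measurable fun t => N t i j) (k : ℕ) :
    Measurable fun t => (N t).charpoly.coeff k := by
  classical
  set nodes : Finset ℂ := (Finset.range (d + 1)).image (Nat.cast) with hnodes
  have hinj : Set.InjOn (id : ℂ → ℂ) nodes := fun a _ b _ h => h
  have hcard : nodes.card = d + 1 := by
    rw [hnodes, Finset.card_image_of_injective _ Nat.cast_injective, Finset.card_range]
  have hrep : ∀ t, (N t).charpoly.coeff k =
      ∑ x ∈ nodes, (x • (1 : Matrix (Fin d) (Fin d) ℂ) - N t).det *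
        (Lagrange.basis nodes id x).coeff k := by
    intro t
    have hdeg : (N t).charpoly.degree < nodes.card := by
      rw [hcard]
      refine lt_of_le_of_lt degree_le_natDegree ?_
      have : (N t).charpoly.natDegree = d := by
        simpa using Matrix.charpoly_natDegree_eq_dim (N t)
      rw [this]
      exact_mod_cast Nat.lt_succ_self d
    conv_lhs => rw [Lagrange.eq_interpolate hinj hdeg]
    rw [Lagrange.interpolate_apply, Polynomial.finset_sum_coeff]
    refine Finset.sum_congr rfl fun x _ => ?_
    rw [coeff_C_mul, aux_eval_charpoly]
    rfl
  simp_rw [hrep]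
  apply Finset.measurable_sum
  intro x _
  apply Measurable.mul_const
  apply aux_meas_det
  intro i j
  have : (fun t => (x • (1 : Matrix (Fin d) (Fin d) ℂ) - N t) i j)
      = fun t => x • (1 : Matrix (Fin d) (Fin d) ℂ) i j - N t i j := by
    funext t; simp [Matrix.sub_apply, Matrix.smul_apply]
  rw [this]
  exact measurable_const.sub (hN i j)

theorem aux_meas_pow {Ω : Type*} [MeasurableSpace Ω] {d : ℕ}
    (N : Ω → Matrix (Fin d) (Fin d) ℂ)
    (hN : ∀ i j, Measurable fun t => N t i j) (m : ℕ) :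
    ∀ i j, Measurable fun t => (N t ^ m) i j := by
  induction m with
  | zero =>
    intro i j
    simp_rw [pow_zero]
    exact measurable_const
  | succ m ih =>
    intro i j
    simp_rw [pow_succ, Matrix.mul_apply]
    exact Finset.measurable_sum _ fun k _ => (ih i k).mul (hN k j)

/-- If `A : Ω → Mat_d(ℂ)` and `f : Ω → ℂ^d` are measurable, then
`{t | f t ∈ Ran (A t)}` is a measurable set. -/
theorem measurableSet_mem_range_matrix
    {Ω : Type*} [MeasurableSpace Ω] {d : ℕ}
    (A : Ω → Matrix (Fin d) (Fin d) ℂ) (f : Ω → Fin d → ℂ)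
    (hA : ∀ i j, Measurable fun t => A t i j) (hf : Measurable f) :
    MeasurableSet {t | ∃ v : Fin d → ℂ, (A t) *ᵥ v = f t} := by
  classical
  set M : Ω → Matrix (Fin d) (Fin d) ℂ := fun t => A t * (A t)ᴴ with hM
  have hMherm : ∀ t, (M t)ᴴ = M t := by
    intro t
    simp [hM, conjTranspose_mul]
  have hMmeas : ∀ i j, Measurable fun t => M t i j := by
    intro i j
    simp_rw [hM, Matrix.mul_apply, conjTranspose_apply]
    exact Finset.measurable_sum _ fun k _ => (hA i k).mul (continuous_star.measurable.comp (hA j k))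
  set c : ℕ → Ω → ℂ := fun i t => (M t).charpoly.coeff i with hcdef
  have hcmeas : ∀ i, Measurable (c i) := fun i => aux_meas_coeff M hMmeas i
  have hfmeas : ∀ j, Measurable fun t => f t j := fun j => (measurable_pi_apply j).comp hf
  have hset : {t | ∃ v : Fin d → ℂ, (A t) *ᵥ v = f t} =
      ⋃ s ∈ Finset.range (d + 1),
        ((⋂ i ∈ Finset.range s, {t | c i t = 0}) ∩ {t | c s t ≠ 0} ∩
          ⋂ k : Fin d, {t | ((∑ i ∈ Finset.Icc s d, c i t • M t ^ (i - s)) *ᵥ f t) k = 0}) := by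
    ext t
    simp only [Set.mem_setOf_eq, Set.mem_iUnion, Set.mem_inter_iff, Set.mem_iInter,
      Finset.mem_range, exists_prop]
    constructor
    · intro hex
      have hd1 : c d t ≠ 0 := by
        have h1 : (M t).charpoly.natDegree = d := by
          simpa using Matrix.charpoly_natDegree_eq_dim (M t)
        have h2 := (Matrix.charpoly_monic (M t)).coeff_natDegree
        rw [h1] at h2
        rw [hcdef]; simp only [h2]; exact one_ne_zero
      have hex' : ∃ s, c s t ≠ 0 := ⟨d, hd1⟩
      set s₀ := Nat.find hex' with hs₀
      have hspec : c s₀ t ≠ 0 := Nat.find_spec hex'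
      have hmin : ∀ i < s₀, c i t = 0 := fun i hi => not_not.mp (Nat.find_min hex' hi)
      have hs₀le : s₀ ≤ d := Nat.find_min' hex' hd1
      refine ⟨s₀, by omega, ⟨fun i hi => hmin i hi, hspec⟩, fun k => ?_⟩
      have := (aux_key (M t) (hMherm t) (f t) s₀ hmin hspec).mp
        ((aux_range_eq (A t) (f t)).mp hex)
      rw [this]
      rfl
    · rintro ⟨s, _, ⟨h0, hsne⟩, hk⟩
      have hvec : (∑ i ∈ Finset.Icc s d, c i t • M t ^ (i - s)) *ᵥ f t = 0 := by
        funext k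
        exact hk k
      exact (aux_range_eq (A t) (f t)).mpr
        ((aux_key (M t) (hMherm t) (f t) s h0 hsne).mpr hvec)
  rw [hset]
  apply MeasurableSet.biUnion (Finset.range (d + 1)).countable_toSet
  intro s _
  apply MeasurableSet.inter
  · apply MeasurableSet.inter
    · apply MeasurableSet.biInter (Finset.range s).countable_toSet
      intro i _
      exact (hcmeas i) (measurableSet_singleton 0)
    · exact ((hcmeas s) (measurableSet_singleton 0)).compl
  · apply MeasurableSet.iInter
    intro k
    have hmeas : Measurable fun t =>
        ((∑ i ∈ Finset.Icc s d, c i t • M t ^ (i - s)) *ᵥ f t) k := by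
      have : (fun t => ((∑ i ∈ Finset.Icc s d, c i t • M t ^ (i - s)) *ᵥ f t) k)
          = fun t => ∑ j, (∑ i ∈ Finset.Icc s d, c i t * (M t ^ (i - s)) k j) * f t j := by
        funext t
        simp [Matrix.mulVec, dotProduct, Matrix.sum_apply, Matrix.smul_apply,
          Finset.sum_mul, smul_eq_mul]
      rw [this]
      refine Finset.measurable_sum _ fun j _ => Measurable.mul ?_ (hfmeas j)
      exact Finset.measurable_sum _ fun i _ =>
        (hcmeas i).mul (aux_meas_pow M hMmeas (i - s) k j)
    exact hmeas (measurableSet_singleton 0)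
end

section
/- Let μ be a σ-finite (finite) measure on 𝔐 and D : Ω → Mat_d(ℂ) measurable with D(t) ≥ 0 for all t. Then L²_D := { classes of g ∈ (L²(μ))^d with g(t) ∈ Ran D(t) for μ-a.e. t } is a closed linear subspace of the Hilbert space (L²(μ))^d. -/
open MeasureTheory Matrix
open scoped ComplexOrder

/-!
Along a subsequence, L²-convergence becomes convergence almost everywhere, and the range of a
matrix is a closed subspace of `ℂ^d` since it is finite-dimensional; so a.e. membership in
`Ran D(t)` passes to L²-limits. Linearity is pointwise.
-/

namespace MeasureTheory.Lp

variable {α 𝕜 E : Type*} [MeasurableSpace α] [NormedRing 𝕜] [NormedAddCommGroup E] [Module 𝕜 E]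
  [IsBoundedSMul 𝕜 E] {p : ENNReal} {μ : Measure α}

def aeMemSubmodule (V : α → Submodule 𝕜 E) : Submodule 𝕜 (Lp E p μ) where
  carrier := {g | ∀ᵐ t ∂μ, g t ∈ V t}
  zero_mem' := by
    filter_upwards [Lp.coeFn_zero E p μ] with t ht
    simp only [ht, Pi.zero_apply, zero_mem]
  add_mem' {g₁ g₂} h₁ h₂ := by
    filter_upwards [h₁, h₂, Lp.coeFn_add g₁ g₂] with t ht₁ ht₂ hadd
    simpa only [hadd, Pi.add_apply] using add_mem ht₁ ht₂
  smul_mem' c g h := by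
    filter_upwards [h, Lp.coeFn_smul c g] with t ht hsmul
    simpa only [hsmul, Pi.smul_apply] using Submodule.smul_mem _ c ht

theorem isClosed_setOf_ae_mem [Fact (1 ≤ p)] {S : α → Set E} (hS : ∀ t, IsClosed (S t)) :
    IsClosed {g : Lp E p μ | ∀ᵐ t ∂μ, g t ∈ S t} := by
  refine IsSeqClosed.isClosed fun f g hf hfg => ?_
  obtain ⟨ns, -, hae⟩ := (tendstoInMeasure_of_tendsto_Lp hfg).exists_seq_tendsto_ae
  filter_upwards [hae, ae_all_iff.2 hf] with t hlim hmem
  exact (hS t).mem_of_tendsto hlim (Filter.Eventually.of_forall fun n => hmem (ns n))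

end MeasureTheory.Lp

theorem rangeD_closed_subspace_general
    {Ω : Type*} [MeasurableSpace Ω] {d : ℕ}
    (μ : Measure Ω)
    (D : Ω → Matrix (Fin d) (Fin d) ℂ) :
    IsClosed {g : Lp (EuclideanSpace ℂ (Fin d)) 2 μ |
        ∀ᵐ t ∂μ, ∃ v : Fin d → ℂ, (D t) *ᵥ v = WithLp.equiv 2 (Fin d → ℂ) (g t)} ∧
    (0 : Lp (EuclideanSpace ℂ (Fin d)) 2 μ) ∈
      {g : Lp (EuclideanSpace ℂ (Fin d)) 2 μ |
        ∀ᵐ t ∂μ, ∃ v : Fin d → ℂ, (D t) *ᵥ v = WithLp.equiv 2 (Fin d → ℂ) (g t)} ∧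
    (∀ g₁ g₂ : Lp (EuclideanSpace ℂ (Fin d)) 2 μ,
      g₁ ∈ {g : Lp (EuclideanSpace ℂ (Fin d)) 2 μ |
        ∀ᵐ t ∂μ, ∃ v : Fin d → ℂ, (D t) *ᵥ v = WithLp.equiv 2 (Fin d → ℂ) (g t)} →
      g₂ ∈ {g : Lp (EuclideanSpace ℂ (Fin d)) 2 μ |
        ∀ᵐ t ∂μ, ∃ v : Fin d → ℂ, (D t) *ᵥ v = WithLp.equiv 2 (Fin d → ℂ) (g t)} →
      g₁ + g₂ ∈ {g : Lp (EuclideanSpace ℂ (Fin d)) 2 μ |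
        ∀ᵐ t ∂μ, ∃ v : Fin d → ℂ, (D t) *ᵥ v = WithLp.equiv 2 (Fin d → ℂ) (g t)}) ∧
    (∀ (c : ℂ) (g₁ : Lp (EuclideanSpace ℂ (Fin d)) 2 μ),
      g₁ ∈ {g : Lp (EuclideanSpace ℂ (Fin d)) 2 μ |
        ∀ᵐ t ∂μ, ∃ v : Fin d → ℂ, (D t) *ᵥ v = WithLp.equiv 2 (Fin d → ℂ) (g t)} →
      c • g₁ ∈ {g : Lp (EuclideanSpace ℂ (Fin d)) 2 μ |
        ∀ᵐ t ∂μ, ∃ v : Fin d → ℂ, (D t) *ᵥ v = WithLp.equiv 2 (Fin d → ℂ) (g t)}) := by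
  let L2D : Submodule ℂ (Lp (EuclideanSpace ℂ (Fin d)) 2 μ) := Lp.aeMemSubmodule fun t =>
    (LinearMap.range (D t).mulVecLin).comap (WithLp.linearEquiv 2 ℂ (Fin d → ℂ)).toLinearMap
  have hL2D : {g : Lp (EuclideanSpace ℂ (Fin d)) 2 μ |
      ∀ᵐ t ∂μ, ∃ v : Fin d → ℂ, (D t) *ᵥ v = WithLp.equiv 2 (Fin d → ℂ) (g t)} = L2D := rfl
  rw [hL2D]
  exact ⟨Lp.isClosed_setOf_ae_mem fun t => Submodule.closed_of_finiteDimensional _,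
    L2D.zero_mem, fun _ _ => L2D.add_mem, fun c _ => L2D.smul_mem c⟩

/-- For a finite measure `μ` and a measurable `D : Ω → Mat_d(ℂ)` with
`D t ≥ 0`, the set `L²_D` of classes `g ∈ (L²(μ))^d` (realized as the Hilbert space
`Lp (EuclideanSpace ℂ (Fin d)) 2 μ`) with `g t ∈ Ran (D t)` for `μ`-a.e. `t` is a closed
linear subspace. -/
theorem rangeD_closed_subspace
    {Ω : Type*} [MeasurableSpace Ω] {d : ℕ}
    (μ : Measure Ω) [IsFiniteMeasure μ]
    (D : Ω → Matrix (Fin d) (Fin d) ℂ)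
    (hDmeas : ∀ i j, Measurable fun t => D t i j)
    (hDpos : ∀ t, (D t).PosSemidef) :
    IsClosed {g : Lp (EuclideanSpace ℂ (Fin d)) 2 μ |
        ∀ᵐ t ∂μ, ∃ v : Fin d → ℂ, (D t) *ᵥ v = WithLp.equiv 2 (Fin d → ℂ) (g t)} ∧
    (0 : Lp (EuclideanSpace ℂ (Fin d)) 2 μ) ∈
      {g : Lp (EuclideanSpace ℂ (Fin d)) 2 μ |
        ∀ᵐ t ∂μ, ∃ v : Fin d → ℂ, (D t) *ᵥ v = WithLp.equiv 2 (Fin d → ℂ) (g t)} ∧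
    (∀ g₁ g₂ : Lp (EuclideanSpace ℂ (Fin d)) 2 μ,
      g₁ ∈ {g : Lp (EuclideanSpace ℂ (Fin d)) 2 μ |
        ∀ᵐ t ∂μ, ∃ v : Fin d → ℂ, (D t) *ᵥ v = WithLp.equiv 2 (Fin d → ℂ) (g t)} →
      g₂ ∈ {g : Lp (EuclideanSpace ℂ (Fin d)) 2 μ |
        ∀ᵐ t ∂μ, ∃ v : Fin d → ℂ, (D t) *ᵥ v = WithLp.equiv 2 (Fin d → ℂ) (g t)} →
      g₁ + g₂ ∈ {g : Lp (EuclideanSpace ℂ (Fin d)) 2 μ |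
        ∀ᵐ t ∂μ, ∃ v : Fin d → ℂ, (D t) *ᵥ v = WithLp.equiv 2 (Fin d → ℂ) (g t)}) ∧
    (∀ (c : ℂ) (g₁ : Lp (EuclideanSpace ℂ (Fin d)) 2 μ),
      g₁ ∈ {g : Lp (EuclideanSpace ℂ (Fin d)) 2 μ |
        ∀ᵐ t ∂μ, ∃ v : Fin d → ℂ, (D t) *ᵥ v = WithLp.equiv 2 (Fin d → ℂ) (g t)} →
      c • g₁ ∈ {g : Lp (EuclideanSpace ℂ (Fin d)) 2 μ |
        ∀ᵐ t ∂μ, ∃ v : Fin d → ℂ, (D t) *ᵥ v = WithLp.equiv 2 (Fin d → ℂ) (g t)}) :=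
  rangeD_closed_subspace_general μ D
end

section
/- Let M be a d×d matrix measure on 𝔐 and F : Ω → ℂ measurable. The multiplication operator T_F on L²(M), with domain D(T_F) = { [f] : f, Ff ∈ 𝓛²(M) } and T_F[f] = [Ff], is densely defined and closed, and its adjoint is T_F* = T_{F̄} with D(T_F*) = D(T_F). In particular T_F is self-adjoint when F is real-valued. -/
/-!
Write `D t = S t * S t` with `S t = √(D t)`, so that `star x ⬝ᵥ (D t *ᵥ y)` is the Euclidean
inner product of `S t x` and `S t y`; pointwise this gives nonnegativity, the bound
`q (x ± y) ≤ 2 (q x + q y)` and Cauchy–Schwarz for `q x = re (star x ⬝ᵥ (D t *ᵥ x))`.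
Density: truncating `f` to `{‖F‖ ≤ n}` puts it in the domain, and the error is the integral
of `q ∘ f` over the shrinking sets `{‖F‖ > n}`. Closedness: the integrands of
`quadInt (Gₙ - f)` and `quadInt (F Gₙ - h)` tend to `0` in `L¹`, hence a.e. along a
subsequence, which forces `q (F f - h) = 0` a.e. Adjoint: testing the adjoint relation
against the truncation `f` of `w = conj F • g - h` to `{‖F‖ ≤ m}` gives `quadInt f = 0`,
so `q ∘ w` vanishes a.e. on every `{‖F‖ ≤ m}`.
-/

open MeasureTheory Matrix Filter
open scoped ComplexOrder

/-- The squared `L²(M)`-seminorm of a `ℂ^d`-valued function, for a matrix measure with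
trace measure `μ` and trace density `D`. -/
noncomputable def quadInt {Ω : Type*} [MeasurableSpace Ω] {d : ℕ}
    (μ : MeasureTheory.Measure Ω) (D : Ω → Matrix (Fin d) (Fin d) ℂ)
    (f : Ω → Fin d → ℂ) : ℝ :=
  ∫ t, (star (f t) ⬝ᵥ ((D t) *ᵥ f t)).re ∂μ

/-- Membership in `𝓛²(M)`: measurable with finite quadratic integral. -/
def MemL2M {Ω : Type*} [MeasurableSpace Ω] {d : ℕ}
    (μ : MeasureTheory.Measure Ω) (D : Ω → Matrix (Fin d) (Fin d) ℂ)
    (f : Ω → Fin d → ℂ) : Prop :=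
  Measurable f ∧ MeasureTheory.Integrable (fun t => (star (f t) ⬝ᵥ ((D t) *ᵥ f t)).re) μ

/-- The `L²(M)` inner product `⟨[f],[g]⟩_M = ∫ ⟨D t f t, g t⟩ dμ t`. -/
noncomputable def pairL2M {Ω : Type*} [MeasurableSpace Ω] {d : ℕ}
    (μ : MeasureTheory.Measure Ω) (D : Ω → Matrix (Fin d) (Fin d) ℂ)
    (f g : Ω → Fin d → ℂ) : ℂ :=
  ∫ t, star (g t) ⬝ᵥ ((D t) *ᵥ f t) ∂μ

open Set
open scoped MatrixOrder

namespace Matrix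
variable {n : Type*} [Fintype n]

noncomputable def quadRe (A : Matrix n n ℂ) (x : n → ℂ) : ℝ := (star x ⬝ᵥ (A *ᵥ x)).re

lemma quadRe_zero (A : Matrix n n ℂ) : quadRe A 0 = 0 := by simp [quadRe]

lemma star_dotProduct_mulVec_smul (A : Matrix n n ℂ) (c : ℂ) (x y : n → ℂ) :
    star y ⬝ᵥ (A *ᵥ (c • x)) = star (starRingEnd ℂ c • y) ⬝ᵥ (A *ᵥ x) := by
  simp [mulVec_smul, star_smul]

lemma quadRe_smul (A : Matrix n n ℂ) (c : ℂ) (x : n → ℂ) :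
    quadRe A (c • x) = ‖c‖ ^ 2 * quadRe A x := by
  simp only [quadRe, star_smul, mulVec_smul, smul_dotProduct, dotProduct_smul, smul_eq_mul,
    ← mul_assoc, Complex.star_def, RCLike.mul_conj]
  norm_cast
  exact Complex.re_ofReal_mul _ _

lemma quadRe_indicator {Ω : Type*} {D : Ω → Matrix n n ℂ} (s : Set Ω) (f : Ω → n → ℂ)
    (t : Ω) :
    quadRe (D t) (s.indicator f t) = s.indicator (fun t => quadRe (D t) (f t)) t := by
  by_cases ht : t ∈ s <;> simp [ht, quadRe_zero]

namespace PosSemidef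
variable {A : Matrix n n ℂ}

lemma dotProduct_mulVec_eq_inner_sqrt [DecidableEq n] (hA : A.PosSemidef) (x y : n → ℂ) :
    star x ⬝ᵥ (A *ᵥ y) =
      inner ℂ (WithLp.toLp 2 (CFC.sqrt A *ᵥ x)) (WithLp.toLp 2 (CFC.sqrt A *ᵥ y)) := by
  have hS : (CFC.sqrt A).IsHermitian := (nonneg_iff_posSemidef.mp (CFC.sqrt_nonneg A)).1
  rw [EuclideanSpace.inner_toLp_toLp, star_mulVec, hS.eq, dotProduct_comm (CFC.sqrt A *ᵥ y),
    ← dotProduct_mulVec, mulVec_mulVec, CFC.sqrt_mul_sqrt_self A (nonneg_iff_posSemidef.mpr hA)]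

lemma quadRe_eq_norm_sq [DecidableEq n] (hA : A.PosSemidef) (x : n → ℂ) :
    quadRe A x = ‖WithLp.toLp 2 (CFC.sqrt A *ᵥ x)‖ ^ 2 := by
  rw [quadRe, hA.dotProduct_mulVec_eq_inner_sqrt, ← inner_self_eq_norm_sq (𝕜 := ℂ)]
  rfl

lemma quadRe_nonneg (hA : A.PosSemidef) (x : n → ℂ) : 0 ≤ quadRe A x :=
  hA.re_dotProduct_nonneg x

lemma quadRe_add_le (hA : A.PosSemidef) (x y : n → ℂ) :
    quadRe A (x + y) ≤ 2 * (quadRe A x + quadRe A y) := by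
  classical
  simp only [hA.quadRe_eq_norm_sq, mulVec_add, WithLp.toLp_add]
  exact (pow_le_pow_left₀ (norm_nonneg _) (norm_add_le _ _) 2).trans add_sq_le

lemma quadRe_sub_le (hA : A.PosSemidef) (x y : n → ℂ) :
    quadRe A (x - y) ≤ 2 * (quadRe A x + quadRe A y) := by
  classical
  simp only [hA.quadRe_eq_norm_sq, mulVec_sub, WithLp.toLp_sub]
  exact (pow_le_pow_left₀ (norm_nonneg _) (norm_sub_le _ _) 2).trans add_sq_le

lemma dotProduct_mulVec_self (hA : A.PosSemidef) (x : n → ℂ) :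
    star x ⬝ᵥ (A *ᵥ x) = quadRe A x := by
  classical
  rw [hA.dotProduct_mulVec_eq_inner_sqrt, hA.quadRe_eq_norm_sq, inner_self_eq_norm_sq_to_K]
  push_cast; rfl

lemma norm_dotProduct_mulVec_le (hA : A.PosSemidef) (x y : n → ℂ) :
    ‖star x ⬝ᵥ (A *ᵥ y)‖ ≤ quadRe A x + quadRe A y := by
  classical
  rw [hA.dotProduct_mulVec_eq_inner_sqrt, hA.quadRe_eq_norm_sq, hA.quadRe_eq_norm_sq]
  set u := WithLp.toLp 2 (CFC.sqrt A *ᵥ x)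
  set v := WithLp.toLp 2 (CFC.sqrt A *ᵥ y)
  nlinarith [norm_inner_le_norm (𝕜 := ℂ) u v, two_mul_le_add_sq ‖u‖ ‖v‖, norm_nonneg u,
    norm_nonneg v]

end PosSemidef
end Matrix

section L2M

variable {Ω : Type*} [MeasurableSpace Ω] {d : ℕ} {μ : Measure Ω}
  {D : Ω → Matrix (Fin d) (Fin d) ℂ}

lemma quadInt_eq_integral_quadRe (f : Ω → Fin d → ℂ) :
    quadInt μ D f = ∫ t, quadRe (D t) (f t) ∂μ := rfl

lemma memL2M_iff {f : Ω → Fin d → ℂ} :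
    MemL2M μ D f ↔ Measurable f ∧ Integrable (fun t => quadRe (D t) (f t)) μ := Iff.rfl

lemma exists_subseq_ae_tendsto_zero_of_tendsto_integral {q : ℕ → Ω → ℝ}
    (hq_nonneg : ∀ n t, 0 ≤ q n t) (hq_int : ∀ n, Integrable (q n) μ)
    (hq : Tendsto (fun n => ∫ t, q n t ∂μ) atTop (nhds 0)) :
    ∃ ns : ℕ → ℕ, ∀ᵐ t ∂μ, Tendsto (fun k => q (ns k) t) atTop (nhds 0) := by
  have hmeas : TendstoInMeasure μ q atTop 0 := by
    refine tendstoInMeasure_of_tendsto_eLpNorm one_ne_zero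
      (fun n => (hq_int n).aestronglyMeasurable) aestronglyMeasurable_zero ?_
    have hnorm : ∀ n, eLpNorm (q n) 1 μ = ENNReal.ofReal (∫ t, q n t ∂μ) := by
      intro n
      rw [eLpNorm_one_eq_lintegral_enorm,
        ofReal_integral_eq_lintegral_ofReal (hq_int n) (ae_of_all _ (hq_nonneg n))]
      congr with t
      exact Real.enorm_of_nonneg (hq_nonneg n t)
    simpa only [sub_zero, hnorm, ENNReal.ofReal_zero] using ENNReal.tendsto_ofReal hq
  obtain ⟨ns, -, hns⟩ := hmeas.exists_seq_tendsto_ae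
  exact ⟨ns, hns⟩

lemma ae_of_forall_ae_norm_le_natCast {E : Type*} [Norm E] {F : Ω → E} {p : Ω → Prop}
    (h : ∀ m : ℕ, ∀ᵐ t ∂μ, ‖F t‖ ≤ m → p t) : ∀ᵐ t ∂μ, p t := by
  filter_upwards [ae_all_iff.2 h] with t ht
  obtain ⟨m, hm⟩ := exists_nat_ge ‖F t‖
  exact ht m hm

lemma measurable_dotProduct_mulVec (hDm : ∀ i j, Measurable fun t => D t i j)
    {u v : Ω → Fin d → ℂ} (hu : Measurable u) (hv : Measurable v) :
    Measurable fun t => star (u t) ⬝ᵥ (D t *ᵥ v t) := by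
  simp only [dotProduct, mulVec]
  fun_prop

lemma memL2M_of_ae_quadRe_le (hDm : ∀ i j, Measurable fun t => D t i j)
    (hD : ∀ t, (D t).PosSemidef) {f : Ω → Fin d → ℂ} (hf : Measurable f) {b : Ω → ℝ}
    (hb : Integrable b μ) (hfb : ∀ᵐ t ∂μ, quadRe (D t) (f t) ≤ b t) : MemL2M μ D f := by
  refine memL2M_iff.2 ⟨hf, hb.mono' (Complex.measurable_re.comp
    (measurable_dotProduct_mulVec hDm hf hf)).aestronglyMeasurable ?_⟩
  filter_upwards [hfb] with t ht
  rwa [Real.norm_of_nonneg ((hD t).quadRe_nonneg _)]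

lemma MemL2M.sub (hDm : ∀ i j, Measurable fun t => D t i j) (hD : ∀ t, (D t).PosSemidef)
    {f g : Ω → Fin d → ℂ} (hf : MemL2M μ D f) (hg : MemL2M μ D g) :
    MemL2M μ D (fun t => f t - g t) :=
  memL2M_of_ae_quadRe_le hDm hD (hf.1.sub hg.1) ((hf.2.add hg.2).const_mul 2)
    (ae_of_all _ fun t => (hD t).quadRe_sub_le _ _)

lemma MemL2M.indicator {f : Ω → Fin d → ℂ} (hf : MemL2M μ D f) {s : Set Ω}
    (hs : MeasurableSet s) : MemL2M μ D (s.indicator f) := by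
  refine memL2M_iff.2 ⟨hf.1.indicator hs, ?_⟩
  simpa only [quadRe_indicator] using (memL2M_iff.1 hf).2.indicator hs

lemma MemL2M.smul_indicator (hDm : ∀ i j, Measurable fun t => D t i j)
    (hD : ∀ t, (D t).PosSemidef) {f : Ω → Fin d → ℂ} (hf : MemL2M μ D f) {c : Ω → ℂ}
    (hc : Measurable c) {s : Set Ω} (hs : MeasurableSet s) {C : ℝ}
    (hcs : ∀ t ∈ s, ‖c t‖ ≤ C) : MemL2M μ D (fun t => c t • s.indicator f t) := by
  refine memL2M_of_ae_quadRe_le hDm hD (hc.smul (hf.1.indicator hs)) (hf.2.const_mul (C ^ 2))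
    (ae_of_all _ fun t => ?_)
  rw [quadRe_smul, quadRe_indicator]
  by_cases ht : t ∈ s
  · rw [Set.indicator_of_mem ht]
    exact mul_le_mul_of_nonneg_right (pow_le_pow_left₀ (norm_nonneg _) (hcs t ht) 2)
      ((hD t).quadRe_nonneg _)
  · rw [Set.indicator_of_notMem ht, mul_zero]
    exact mul_nonneg (sq_nonneg C) ((hD t).quadRe_nonneg _)

lemma MemL2M.integrable_dotProduct_mulVec (hDm : ∀ i j, Measurable fun t => D t i j)
    (hD : ∀ t, (D t).PosSemidef) {f g : Ω → Fin d → ℂ} (hf : MemL2M μ D f)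
    (hg : MemL2M μ D g) : Integrable (fun t => star (g t) ⬝ᵥ (D t *ᵥ f t)) μ :=
  (hg.2.add hf.2).mono' (measurable_dotProduct_mulVec hDm hg.1 hf.1).aestronglyMeasurable
    (ae_of_all _ fun t => (hD t).norm_dotProduct_mulVec_le _ _)

lemma pairL2M_self (hD : ∀ t, (D t).PosSemidef) (f : Ω → Fin d → ℂ) :
    pairL2M μ D f f = quadInt μ D f := by
  rw [pairL2M, quadInt_eq_integral_quadRe, ← integral_complex_ofReal]
  congr with t
  exact (hD t).dotProduct_mulVec_self _

lemma MemL2M.ae_quadRe_eq_zero (hD : ∀ t, (D t).PosSemidef) {f : Ω → Fin d → ℂ}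
    (hf : MemL2M μ D f) (h0 : quadInt μ D f = 0) : ∀ᵐ t ∂μ, quadRe (D t) (f t) = 0 :=
  (integral_eq_zero_iff_of_nonneg (fun t => (hD t).quadRe_nonneg _) hf.2).1 h0

lemma memL2M_and_quadInt_sub_eq_zero_of_ae (hDm : ∀ i j, Measurable fun t => D t i j)
    (hD : ∀ t, (D t).PosSemidef) {u h : Ω → Fin d → ℂ} (hh : MemL2M μ D h)
    (hu : Measurable u)
    (h0 : ∀ᵐ t ∂μ, quadRe (D t) (u t - h t) = 0) :
    MemL2M μ D u ∧ quadInt μ D (fun t => u t - h t) = 0 := by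
  refine ⟨memL2M_of_ae_quadRe_le hDm hD hu ((memL2M_iff.1 hh).2.const_mul 2) ?_,
    integral_eq_zero_of_ae h0⟩
  filter_upwards [h0] with t ht
  simpa [ht] using (hD t).quadRe_add_le (h t) (u t - h t)

lemma tendsto_quadInt_sub_indicator {f : Ω → Fin d → ℂ} (hf : MemL2M μ D f)
    {s : ℕ → Set Ω} (hs : ∀ n, MeasurableSet (s n)) (hmono : Monotone s)
    (hcover : ⋃ n, s n = univ) :
    Tendsto (fun n => quadInt μ D (fun t => f t - (s n).indicator f t)) atTop (nhds 0) := by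
  have hcompl : ∀ n, quadInt μ D (fun t => f t - (s n).indicator f t)
      = ∫ t in (s n)ᶜ, quadRe (D t) (f t) ∂μ := by
    intro n
    rw [← integral_indicator (hs n).compl, quadInt_eq_integral_quadRe]
    congr 1
    funext t
    rw [← Pi.sub_apply f, ← indicator_compl, quadRe_indicator]
  have h := tendsto_setIntegral_of_antitone (fun n => (hs n).compl)
    (fun m n hmn => compl_subset_compl.2 (hmono hmn)) ⟨0, (memL2M_iff.1 hf).2.integrableOn⟩
  rwa [← compl_iUnion, hcover, compl_univ, setIntegral_empty, ← funext hcompl] at h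

theorem exists_memL2M_smul_quadInt_sub_lt (hDm : ∀ i j, Measurable fun t => D t i j)
    (hD : ∀ t, (D t).PosSemidef) {F : Ω → ℂ} (hF : Measurable F) {f : Ω → Fin d → ℂ}
    (hf : MemL2M μ D f) {ε : ℝ} (hε : 0 < ε) :
    ∃ g : Ω → Fin d → ℂ, MemL2M μ D g ∧ MemL2M μ D (fun t => F t • g t) ∧
      quadInt μ D (fun t => f t - g t) < ε := by
  have hs : ∀ n : ℕ, MeasurableSet {t | ‖F t‖ ≤ n} := fun n =>
    measurableSet_le hF.norm measurable_const
  have hmono : Monotone fun n : ℕ => {t | ‖F t‖ ≤ n} :=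
    fun m n hmn t (ht : ‖F t‖ ≤ m) => ht.trans (Nat.cast_le.2 hmn)
  have hcover : ⋃ n : ℕ, {t | ‖F t‖ ≤ n} = univ :=
    eq_univ_of_forall fun t => mem_iUnion.2 (exists_nat_ge ‖F t‖)
  obtain ⟨n, hn⟩ := ((tendsto_quadInt_sub_indicator hf hs hmono hcover).eventually
    (gt_mem_nhds hε)).exists
  exact ⟨_, hf.indicator (hs n), hf.smul_indicator hDm hD hF (hs n) fun t ht => ht, hn⟩

theorem memL2M_smul_and_quadInt_sub_eq_zero_of_tendsto
    (hDm : ∀ i j, Measurable fun t => D t i j) (hD : ∀ t, (D t).PosSemidef) {F : Ω → ℂ}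
    (hF : Measurable F) {f h : Ω → Fin d → ℂ} {G : ℕ → Ω → Fin d → ℂ}
    (hf : MemL2M μ D f) (hh : MemL2M μ D h)
    (hG : ∀ n, MemL2M μ D (G n) ∧ MemL2M μ D (fun t => F t • G n t))
    (hGf : Tendsto (fun n => quadInt μ D (fun t => G n t - f t)) atTop (nhds 0))
    (hFGh : Tendsto (fun n => quadInt μ D (fun t => F t • G n t - h t)) atTop (nhds 0)) :
    MemL2M μ D (fun t => F t • f t) ∧ quadInt μ D (fun t => F t • f t - h t) = 0 := by
  refine memL2M_and_quadInt_sub_eq_zero_of_ae hDm hD hh (hF.smul hf.1) ?_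
  set q : ℕ → Ω → ℝ := fun n t =>
    quadRe (D t) (G n t - f t) + quadRe (D t) (F t • G n t - h t)
  have hq_int : ∀ n, Integrable (q n) μ := fun n =>
    (memL2M_iff.1 ((hG n).1.sub hDm hD hf)).2.add (memL2M_iff.1 ((hG n).2.sub hDm hD hh)).2
  have hq_lim : Tendsto (fun n => ∫ t, q n t ∂μ) atTop (nhds 0) := by
    have hsplit : ∀ n, ∫ t, q n t ∂μ = quadInt μ D (fun t => G n t - f t)
        + quadInt μ D (fun t => F t • G n t - h t) := fun n =>
      integral_add (memL2M_iff.1 ((hG n).1.sub hDm hD hf)).2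
        (memL2M_iff.1 ((hG n).2.sub hDm hD hh)).2
    simpa only [hsplit, add_zero] using hGf.add hFGh
  obtain ⟨ns, hns⟩ := exists_subseq_ae_tendsto_zero_of_tendsto_integral
    (fun n t => add_nonneg ((hD t).quadRe_nonneg _) ((hD t).quadRe_nonneg _)) hq_int hq_lim
  filter_upwards [hns] with t ht
  have hbound : ∀ n, quadRe (D t) (F t • f t - h t) ≤ 2 * (‖F t‖ ^ 2 + 1) * q n t := by
    intro n
    have hsplit : F t • f t - h t = (F t • G n t - h t) - F t • (G n t - f t) := by
      rw [smul_sub]; abel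
    have := (hD t).quadRe_sub_le (F t • G n t - h t) (F t • (G n t - f t))
    rw [← hsplit, quadRe_smul] at this
    nlinarith [(hD t).quadRe_nonneg (G n t - f t), (hD t).quadRe_nonneg (F t • G n t - h t),
      sq_nonneg ‖F t‖]
  have hlim : Tendsto (fun k => 2 * (‖F t‖ ^ 2 + 1) * q (ns k) t) atTop (nhds 0) := by
    simpa using ht.const_mul (2 * (‖F t‖ ^ 2 + 1))
  exact le_antisymm (ge_of_tendsto' hlim fun k => hbound (ns k)) ((hD t).quadRe_nonneg _)

theorem pairL2M_smul_left (F : Ω → ℂ) (f g : Ω → Fin d → ℂ) :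
    pairL2M μ D (fun t => F t • f t) g =
      pairL2M μ D f (fun t => starRingEnd ℂ (F t) • g t) := by
  simp only [pairL2M, star_dotProduct_mulVec_smul]

theorem memL2M_conj_smul_and_quadInt_sub_eq_zero_of_pairL2M_eq
    (hDm : ∀ i j, Measurable fun t => D t i j) (hD : ∀ t, (D t).PosSemidef) {F : Ω → ℂ}
    (hF : Measurable F) {g h : Ω → Fin d → ℂ} (hg : MemL2M μ D g) (hh : MemL2M μ D h)
    (hadj : ∀ f : Ω → Fin d → ℂ, MemL2M μ D f → MemL2M μ D (fun t => F t • f t) →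
      pairL2M μ D (fun t => F t • f t) g = pairL2M μ D f h) :
    MemL2M μ D (fun t => starRingEnd ℂ (F t) • g t) ∧
      quadInt μ D (fun t => starRingEnd ℂ (F t) • g t - h t) = 0 := by
  have hF' : Measurable fun t => starRingEnd ℂ (F t) := by fun_prop
  refine memL2M_and_quadInt_sub_eq_zero_of_ae hDm hD hh (hF'.smul hg.1)
    (ae_of_forall_ae_norm_le_natCast (F := F) fun m => ?_)
  set s := {t | ‖F t‖ ≤ m}
  have hs : MeasurableSet s := measurableSet_le hF.norm measurable_const
  set w := fun t => starRingEnd ℂ (F t) • g t - h t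
  have hf : MemL2M μ D (s.indicator w) := by
    have : s.indicator w =
        fun t => starRingEnd ℂ (F t) • s.indicator g t - s.indicator h t := by
      funext t
      by_cases ht : t ∈ s <;> simp [ht, w]
    rw [this]
    have hconj_le : ∀ t ∈ s, ‖starRingEnd ℂ (F t)‖ ≤ m := fun t (ht : ‖F t‖ ≤ m) => by
      rwa [RCLike.norm_conj]
    exact (hg.smul_indicator hDm hD hF' hs hconj_le).sub hDm hD (hh.indicator hs)
  have hFf : MemL2M μ D (fun t => F t • s.indicator w t) := by
    simpa only [indicator_indicator, inter_self] using
      hf.smul_indicator hDm hD hF hs fun t ht => ht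
  have hzero : quadInt μ D (s.indicator w) = 0 := by
    have key : pairL2M μ D (fun t => F t • s.indicator w t) g - pairL2M μ D (s.indicator w) h
        = pairL2M μ D (s.indicator w) (s.indicator w) := by
      rw [pairL2M, pairL2M, ← integral_sub (hFf.integrable_dotProduct_mulVec hDm hD hg)
        (hf.integrable_dotProduct_mulVec hDm hD hh)]
      congr 1
      funext t
      rw [star_dotProduct_mulVec_smul, ← sub_dotProduct, ← star_sub]
      by_cases ht : t ∈ s <;> simp [ht, w]
    rw [hadj _ hf hFf, sub_self, pairL2M_self hD] at key
    exact_mod_cast key.symm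
  filter_upwards [hf.ae_quadRe_eq_zero hD hzero] with t ht hts
  rwa [indicator_of_mem (show t ∈ s from hts)] at ht

end L2M

theorem multiplication_operator_densely_defined_closed_adjoint_general
    {Ω : Type*} [MeasurableSpace Ω] {d : ℕ}
    (μ : Measure Ω)
    (D : Ω → Matrix (Fin d) (Fin d) ℂ)
    (hDmeas : ∀ i j, Measurable fun t => D t i j)
    (hDpos : ∀ t, (D t).PosSemidef)
    (F : Ω → ℂ) (hF : Measurable F) :
    -- T_F is densely defined: its domain is dense in L²(M)
    (∀ f : Ω → Fin d → ℂ, MemL2M μ D f → ∀ ε : ℝ, 0 < ε →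
      ∃ g : Ω → Fin d → ℂ, MemL2M μ D g ∧ MemL2M μ D (fun t => F t • g t) ∧
        quadInt μ D (fun t => f t - g t) < ε) ∧
    -- T_F is closed: if [gₙ] → [f] and T_F [gₙ] → [h], then [f] ∈ D(T_F), T_F [f] = [h]
    (∀ (f h : Ω → Fin d → ℂ) (G : ℕ → Ω → Fin d → ℂ),
      MemL2M μ D f → MemL2M μ D h →
      (∀ n, MemL2M μ D (G n) ∧ MemL2M μ D (fun t => F t • G n t)) →
      Tendsto (fun n => quadInt μ D (fun t => G n t - f t)) atTop (nhds 0) →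
      Tendsto (fun n => quadInt μ D (fun t => F t • G n t - h t)) atTop (nhds 0) →
      MemL2M μ D (fun t => F t • f t) ∧
        quadInt μ D (fun t => F t • f t - h t) = 0) ∧
    -- T_{conj F} ⊆ (T_F)* : the pairing identity ⟨T_F f, g⟩ = ⟨f, T_{conj F} g⟩
    (∀ f g : Ω → Fin d → ℂ,
      MemL2M μ D f → MemL2M μ D (fun t => F t • f t) →
      MemL2M μ D g → MemL2M μ D (fun t => (starRingEnd ℂ) (F t) • g t) →
      pairL2M μ D (fun t => F t • f t) g
        = pairL2M μ D f (fun t => (starRingEnd ℂ) (F t) • g t)) ∧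
    -- (T_F)* ⊆ T_{conj F} : if ⟨T_F f, g⟩ = ⟨f, h⟩ for all f ∈ D(T_F), then
    -- conj F · g ∈ 𝓛²(M) and [conj F · g] = [h] (in particular D((T_F)*) = D(T_{conj F}))
    (∀ g h : Ω → Fin d → ℂ, MemL2M μ D g → MemL2M μ D h →
      (∀ f : Ω → Fin d → ℂ, MemL2M μ D f → MemL2M μ D (fun t => F t • f t) →
        pairL2M μ D (fun t => F t • f t) g = pairL2M μ D f h) →
      MemL2M μ D (fun t => (starRingEnd ℂ) (F t) • g t) ∧
        quadInt μ D (fun t => (starRingEnd ℂ) (F t) • g t - h t) = 0) := by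
  exact ⟨fun f hf ε hε => exists_memL2M_smul_quadInt_sub_lt hDmeas hDpos hF hf hε,
    fun f h G hf hh hG hGf hFGh =>
      memL2M_smul_and_quadInt_sub_eq_zero_of_tendsto hDmeas hDpos hF hf hh hG hGf hFGh,
    fun f g _ _ _ _ => pairL2M_smul_left F f g,
    fun g h hg hh hadj =>
      memL2M_conj_smul_and_quadInt_sub_eq_zero_of_pairL2M_eq hDmeas hDpos hF hg hh hadj⟩

/-- For a matrix measure `M` (trace measure `μ`, density `D`) and measurable
`F : Ω → ℂ`, the multiplication operator `T_F` on `L²(M)` — with domain the classes `[f]`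
with `f, F·f ∈ 𝓛²(M)` and `T_F [f] = [F·f]` — is densely defined, closed, and its adjoint
is `T_{conj F}` with the same domain (so `T_F` is self-adjoint for real `F`). Everything is
expressed at the level of representatives modulo the zero layer (seminorm `quadInt`). -/
theorem multiplication_operator_densely_defined_closed_adjoint
    {Ω : Type*} [MeasurableSpace Ω] {d : ℕ}
    (M : Set Ω → Matrix (Fin d) (Fin d) ℂ)
    (μ : Measure Ω) [IsFiniteMeasure μ]
    (D : Ω → Matrix (Fin d) (Fin d) ℂ)
    (hpos : ∀ ω : Set Ω, MeasurableSet ω → (M ω).PosSemidef)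
    (hμ : ∀ ω : Set Ω, MeasurableSet ω → (M ω).trace = ((μ ω).toReal : ℂ))
    (hDmeas : ∀ i j, Measurable fun t => D t i j)
    (hDpos : ∀ t, (D t).PosSemidef)
    (hden : ∀ ω : Set Ω, MeasurableSet ω → ∀ i j, M ω i j = ∫ t in ω, D t i j ∂μ)
    (F : Ω → ℂ) (hF : Measurable F) :
    -- T_F is densely defined: its domain is dense in L²(M)
    (∀ f : Ω → Fin d → ℂ, MemL2M μ D f → ∀ ε : ℝ, 0 < ε →
      ∃ g : Ω → Fin d → ℂ, MemL2M μ D g ∧ MemL2M μ D (fun t => F t • g t) ∧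
        quadInt μ D (fun t => f t - g t) < ε) ∧
    -- T_F is closed: if [gₙ] → [f] and T_F [gₙ] → [h], then [f] ∈ D(T_F), T_F [f] = [h]
    (∀ (f h : Ω → Fin d → ℂ) (G : ℕ → Ω → Fin d → ℂ),
      MemL2M μ D f → MemL2M μ D h →
      (∀ n, MemL2M μ D (G n) ∧ MemL2M μ D (fun t => F t • G n t)) →
      Tendsto (fun n => quadInt μ D (fun t => G n t - f t)) atTop (nhds 0) →
      Tendsto (fun n => quadInt μ D (fun t => F t • G n t - h t)) atTop (nhds 0) →
      MemL2M μ D (fun t => F t • f t) ∧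
        quadInt μ D (fun t => F t • f t - h t) = 0) ∧
    -- T_{conj F} ⊆ (T_F)* : the pairing identity ⟨T_F f, g⟩ = ⟨f, T_{conj F} g⟩
    (∀ f g : Ω → Fin d → ℂ,
      MemL2M μ D f → MemL2M μ D (fun t => F t • f t) →
      MemL2M μ D g → MemL2M μ D (fun t => (starRingEnd ℂ) (F t) • g t) →
      pairL2M μ D (fun t => F t • f t) g
        = pairL2M μ D f (fun t => (starRingEnd ℂ) (F t) • g t)) ∧
    -- (T_F)* ⊆ T_{conj F} : if ⟨T_F f, g⟩ = ⟨f, h⟩ for all f ∈ D(T_F), then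
    -- conj F · g ∈ 𝓛²(M) and [conj F · g] = [h] (in particular D((T_F)*) = D(T_{conj F}))
    (∀ g h : Ω → Fin d → ℂ, MemL2M μ D g → MemL2M μ D h →
      (∀ f : Ω → Fin d → ℂ, MemL2M μ D f → MemL2M μ D (fun t => F t • f t) →
        pairL2M μ D (fun t => F t • f t) g = pairL2M μ D f h) →
      MemL2M μ D (fun t => (starRingEnd ℂ) (F t) • g t) ∧
        quadInt μ D (fun t => (starRingEnd ℂ) (F t) • g t - h t) = 0) :=
  multiplication_operator_densely_defined_closed_adjoint_general μ D hDmeas hDpos F hF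
end

section
/- Let M be a d×d matrix measure with L²(M) ≠ {0} and F : Ω → ℂ measurable. Then the spectrum of the multiplication operator T_F on L²(M) equals the essential value set of F with respect to the trace measure: σ(T_F) = VE_{tr_M}(F), and the point spectrum is σ_p(T_F) = { λ ∈ ℂ : tr_M(F⁻¹({λ})) ≠ 0 }. Moreover, T_F is bounded iff VE_{tr_M}(F) is bounded, in which case ‖T_F‖ = sup{ |λ| : λ ∈ VE_{tr_M}(F) }. -/
open MeasureTheory Matrix
open scoped ComplexOrder

/-- The essential value set `VE_μ(F)`: the complement of the union of all open `U ⊆ ℂ`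
with `μ (F⁻¹ U) = 0`. -/
def essValueSet {Ω : Type*} [MeasurableSpace Ω]
    (μ : MeasureTheory.Measure Ω) (F : Ω → ℂ) : Set ℂ :=
  {z : ℂ | ∀ U : Set ℂ, IsOpen U → z ∈ U → μ (F ⁻¹' U) ≠ 0}

/-!
Pointwise, `T_F` multiplies the quadratic form `x ↦ ⟪x, D t x⟫` by `‖F t‖²`, so every estimate
for `T_F` is an estimate between integrands. Almost every value of `F` lies in
`VE_{tr_M}(F)`, which gives the upper bounds; if `λ ∉ VE_{tr_M}(F)` then `‖F - λ‖` is
essentially bounded below and `(F - λ)⁻¹ • g` solves `(T_F - λ) f = g`. Conversely, whenever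
`tr_M (A) ≠ 0` the trace identity `∑ᵢ ∫_A Dᵢᵢ = tr_M (A)` yields a coordinate vector `eᵢ` with
`∫_A Dᵢᵢ > 0`, and `1_A eᵢ` is a nonzero element of `L²(M)` supported in `A`. Taking `A` a
preimage of a small ball (or of a point) makes these approximate eigenvectors (or
eigenvectors) of `T_F`.
-/

open Set

namespace MatrixMeasure

section QuadForm

variable {n : Type*} [Fintype n]

noncomputable def quadForm (A : Matrix n n ℂ) (x : n → ℂ) : ℝ :=
  (star x ⬝ᵥ (A *ᵥ x)).re

theorem quadForm_nonneg {A : Matrix n n ℂ} (hA : A.PosSemidef) (x : n → ℂ) :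
    0 ≤ quadForm A x :=
  (Complex.nonneg_iff.mp (hA.dotProduct_mulVec_nonneg x)).1

@[simp]
theorem quadForm_zero (A : Matrix n n ℂ) : quadForm A 0 = 0 := by
  simp [quadForm]

theorem quadForm_smul (A : Matrix n n ℂ) (c : ℂ) (x : n → ℂ) :
    quadForm A (c • x) = ‖c‖ ^ 2 * quadForm A x := by
  have : star (c • x) ⬝ᵥ (A *ᵥ (c • x)) = ((‖c‖ ^ 2 : ℝ) : ℂ) * (star x ⬝ᵥ (A *ᵥ x)) := by
    rw [star_smul, mulVec_smul, smul_dotProduct, dotProduct_smul, smul_smul, smul_eq_mul,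
      Complex.star_def, Complex.conj_mul', Complex.ofReal_pow]
  rw [quadForm, quadForm, this, Complex.re_ofReal_mul]

theorem quadForm_add_le {A : Matrix n n ℂ} (hA : A.PosSemidef) (x y : n → ℂ) :
    quadForm A (x + y) ≤ 2 * quadForm A x + 2 * quadForm A y := by
  have parallelogram : quadForm A (x + y) + quadForm A (x - y) =
      2 * quadForm A x + 2 * quadForm A y := by
    simp only [quadForm, star_add, star_sub, mulVec_add, mulVec_sub, add_dotProduct,
      sub_dotProduct, dotProduct_add, dotProduct_sub, Complex.add_re, Complex.sub_re]
    ring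
  linarith [quadForm_nonneg hA (x - y)]

theorem quadForm_single [DecidableEq n] (A : Matrix n n ℂ) (i : n) :
    quadForm A (Pi.single i 1) = (A i i).re := by
  simp [quadForm, mulVec_single]

end QuadForm

section L2

variable {Ω : Type*} [MeasurableSpace Ω] {d : ℕ} {μ : Measure Ω}
  {D : Ω → Matrix (Fin d) (Fin d) ℂ} {f g : Ω → Fin d → ℂ}

theorem quadInt_eq_integral_quadForm :
    quadInt μ D f = ∫ t, quadForm (D t) (f t) ∂μ := rfl

theorem measurable_quadForm (hDm : ∀ i j, Measurable fun t => D t i j) (hf : Measurable f) :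
    Measurable fun t => quadForm (D t) (f t) := by
  refine Complex.measurable_re.comp (Finset.measurable_sum _ fun i _ => ?_)
  simp only [mulVec, dotProduct]
  exact (continuous_star.measurable.comp hf.eval).mul
    (Finset.measurable_sum _ fun j _ => (hDm i j).mul hf.eval)

theorem memL2M_of_ae_le (hD : ∀ t, (D t).PosSemidef) (hDm : ∀ i j, Measurable fun t => D t i j)
    (hg : Measurable g) {h : Ω → ℝ} (hh : Integrable h μ)
    (hgh : ∀ᵐ t ∂μ, quadForm (D t) (g t) ≤ h t) : MemL2M μ D g := by
  refine ⟨hg, hh.mono' (measurable_quadForm hDm hg).aestronglyMeasurable ?_⟩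
  filter_upwards [hgh] with t ht
  exact (Real.norm_of_nonneg (quadForm_nonneg (hD t) (g t))).trans_le ht

theorem quadInt_le_mul_of_ae_le (hg : MemL2M μ D g) (hf : MemL2M μ D f) {c : ℝ}
    (hgf : ∀ᵐ t ∂μ, quadForm (D t) (g t) ≤ c * quadForm (D t) (f t)) :
    quadInt μ D g ≤ c * quadInt μ D f := by
  rw [quadInt_eq_integral_quadForm, quadInt_eq_integral_quadForm, ← integral_const_mul]
  exact integral_mono_ae hg.2 (hf.2.const_mul c) hgf

theorem mul_quadInt_le_of_ae_le (hf : MemL2M μ D f) (hg : MemL2M μ D g) {c : ℝ}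
    (hfg : ∀ᵐ t ∂μ, c * quadForm (D t) (f t) ≤ quadForm (D t) (g t)) :
    c * quadInt μ D f ≤ quadInt μ D g := by
  rw [quadInt_eq_integral_quadForm, quadInt_eq_integral_quadForm, ← integral_const_mul]
  exact integral_mono_ae (hf.2.const_mul c) hg.2 hfg

theorem quadInt_eq_zero_of_ae_eq_zero (hf : ∀ᵐ t ∂μ, f t = 0) : quadInt μ D f = 0 :=
  integral_eq_zero_of_ae <| hf.mono fun t ht => by simp [ht]

theorem ae_quadForm_eq_zero_of_quadInt_eq_zero (hD : ∀ t, (D t).PosSemidef)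
    (hf : MemL2M μ D f) (h : quadInt μ D f = 0) : ∀ᵐ t ∂μ, quadForm (D t) (f t) = 0 :=
  (integral_eq_zero_iff_of_nonneg (fun t => quadForm_nonneg (hD t) (f t)) hf.2).mp h

theorem _root_.MemL2M.const_smul (hf : MemL2M μ D f) (c : ℂ) : MemL2M μ D fun t => c • f t := by
  refine ⟨hf.1.const_smul c, (hf.2.const_mul (‖c‖ ^ 2)).congr ?_⟩
  filter_upwards with t using (quadForm_smul (D t) c (f t)).symm

theorem _root_.MemL2M.add (hD : ∀ t, (D t).PosSemidef)
    (hDm : ∀ i j, Measurable fun t => D t i j)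
    (hf : MemL2M μ D f) (hg : MemL2M μ D g) : MemL2M μ D fun t => f t + g t :=
  memL2M_of_ae_le hD hDm (hf.1.add hg.1) ((hf.2.const_mul 2).add (hg.2.const_mul 2))
    (ae_of_all _ fun t => quadForm_add_le (hD t) (f t) (g t))

end L2

section TraceDensity

variable {Ω : Type*} [MeasurableSpace Ω] {d : ℕ} {μ : Measure Ω}
  {D : Ω → Matrix (Fin d) (Fin d) ℂ}

theorem sum_setIntegral_re_diag (M : Set Ω → Matrix (Fin d) (Fin d) ℂ)
    (hμ : ∀ ω : Set Ω, MeasurableSet ω → (M ω).trace = ((μ ω).toReal : ℂ))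
    (hD : ∀ t, (D t).PosSemidef)
    (hden : ∀ ω : Set Ω, MeasurableSet ω → ∀ i j, M ω i j = ∫ t in ω, D t i j ∂μ)
    {A : Set Ω} (hA : MeasurableSet A) :
    ∑ i, ∫ t in A, (D t i i).re ∂μ = (μ A).toReal := by
  have hdiag : ∀ i t, ((D t i i).re : ℂ) = D t i i := fun i t =>
    (hD t).1.coe_re_apply_self i
  rw [← Complex.ofReal_inj, ← hμ A hA, trace]
  push_cast
  refine Finset.sum_congr rfl fun i _ => ?_
  calc ((∫ t in A, (D t i i).re ∂μ : ℝ) : ℂ) = ∫ t in A, ((D t i i).re : ℂ) ∂μ :=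
        integral_ofReal.symm
    _ = M A i i := by simp_rw [hdiag, hden A hA]

/- `hTr` cannot be applied to `univ` directly: a non-integrable `Dᵢᵢ` would have Bochner
integral `0`. Its truncations `{Dᵢᵢ ≤ n}` are integrable, with integrals bounded by `μ univ`. -/
theorem integrable_re_diag [IsFiniteMeasure μ] (hD : ∀ t, (D t).PosSemidef)
    (hDm : ∀ i j, Measurable fun t => D t i j)
    (hTr : ∀ A, MeasurableSet A → ∑ i, ∫ t in A, (D t i i).re ∂μ = (μ A).toReal)
    (i : Fin d) : Integrable (fun t => (D t i i).re) μ := by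
  have hm : Measurable fun t => (D t i i).re := Complex.measurable_re.comp (hDm i i)
  have hnn : ∀ t j, 0 ≤ (D t j j).re := fun t j =>
    quadForm_single (D t) j ▸ quadForm_nonneg (hD t) _
  have hcover : AECover μ Filter.atTop fun n : ℕ => {t | (D t i i).re ≤ n} :=
    ⟨ae_of_all _ fun t => Filter.eventually_atTop.2
      ⟨⌈(D t i i).re⌉₊, fun n hn => (Nat.le_ceil _).trans (Nat.cast_le.2 hn)⟩,
      fun n => hm measurableSet_Iic⟩
  refine hcover.integrable_of_integral_bounded_of_nonneg_ae (μ univ).toReal (fun n => ?_)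
    (ae_of_all _ fun t => hnn t i) (Filter.Eventually.of_forall fun n => ?_)
  · refine IntegrableOn.of_bound (measure_lt_top _ _) hm.aestronglyMeasurable n
      (ae_restrict_of_forall_mem (hcover.measurableSet n) fun t ht => ?_)
    rwa [Real.norm_of_nonneg (hnn t i)]
  · calc ∫ t in {t | (D t i i).re ≤ n}, (D t i i).re ∂μ
        ≤ ∑ j, ∫ t in {t | (D t i i).re ≤ n}, (D t j j).re ∂μ :=
          Finset.single_le_sum (f := fun j => ∫ t in {t | (D t i i).re ≤ n}, (D t j j).re ∂μ)
            (fun j _ => integral_nonneg fun t => hnn t j) (Finset.mem_univ i)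
      _ = (μ {t | (D t i i).re ≤ n}).toReal := hTr _ (hcover.measurableSet n)
      _ ≤ (μ univ).toReal :=
          ENNReal.toReal_mono (measure_ne_top μ _) (measure_mono (subset_univ _))

theorem exists_memL2M_quadInt_pos [IsFiniteMeasure μ] (hD : ∀ t, (D t).PosSemidef)
    (hDm : ∀ i j, Measurable fun t => D t i j)
    (hTr : ∀ A, MeasurableSet A → ∑ i, ∫ t in A, (D t i i).re ∂μ = (μ A).toReal)
    {A : Set Ω} (hA : MeasurableSet A) (hμA : μ A ≠ 0) :
    ∃ f, MemL2M μ D f ∧ 0 < quadInt μ D f ∧ ∀ t ∉ A, f t = 0 := by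
  obtain ⟨i, -, hi⟩ : ∃ i ∈ Finset.univ, (0 : ℝ) < ∫ t in A, (D t i i).re ∂μ := by
    refine Finset.exists_lt_of_sum_lt ?_
    rw [Finset.sum_const_zero, hTr A hA]
    exact ENNReal.toReal_pos hμA (measure_ne_top μ A)
  have hq : ∀ t, quadForm (D t) (A.indicator (fun _ => Pi.single i 1) t) =
      A.indicator (fun t => (D t i i).re) t := by
    intro t
    by_cases ht : t ∈ A <;> simp [ht, quadForm_single]
  refine ⟨A.indicator fun _ => Pi.single i 1, ⟨measurable_const.indicator hA, ?_⟩, ?_,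
    fun t ht => indicator_of_notMem ht _⟩
  · exact ((integrable_re_diag hD hDm hTr i).indicator hA).congr
      (ae_of_all _ fun t => (hq t).symm)
  · rwa [quadInt_eq_integral_quadForm, funext hq, integral_indicator hA]

end TraceDensity

section EssValueSet

variable {Ω : Type*} [MeasurableSpace Ω] {μ : Measure Ω} {F : Ω → ℂ}

theorem ae_mem_essValueSet : ∀ᵐ t ∂μ, F t ∈ essValueSet μ F := by
  obtain ⟨T, hTc, hTnull, hTU⟩ := TopologicalSpace.isOpen_sUnion_countable
    {U : Set ℂ | IsOpen U ∧ μ (F ⁻¹' U) = 0} fun U hU => hU.1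
  have hcompl : (essValueSet μ F)ᶜ = ⋃₀ T := by
    ext z
    simp only [hTU, essValueSet, mem_compl_iff, mem_ofPred_eq, not_forall, not_not, mem_sUnion]
    exact ⟨fun ⟨U, hU, hzU, hnull⟩ => ⟨U, ⟨hU, hnull⟩, hzU⟩,
      fun ⟨U, ⟨hU, hnull⟩, hzU⟩ => ⟨U, hU, hzU, hnull⟩⟩
  change μ (F ⁻¹' (essValueSet μ F)ᶜ) = 0
  rw [hcompl, sUnion_eq_biUnion, preimage_iUnion₂, measure_biUnion_null_iff hTc]
  exact fun U hU => (hTnull hU).2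

theorem exists_pos_ae_le_norm_sub_of_notMem_essValueSet {lam : ℂ}
    (hlam : lam ∉ essValueSet μ F) : ∃ ε > 0, ∀ᵐ t ∂μ, ε ≤ ‖F t - lam‖ := by
  simp only [essValueSet, mem_ofPred_eq, not_forall, not_not] at hlam
  obtain ⟨U, hU, hlamU, hnull⟩ := hlam
  obtain ⟨ε, hε, hball⟩ := Metric.isOpen_iff.mp hU lam hlamU
  refine ⟨ε, hε, measure_mono_null (fun t ht => hball ?_) hnull⟩
  simpa [dist_eq_norm] using ht

end EssValueSet

section MultiplicationOperator

variable {Ω : Type*} [MeasurableSpace Ω] {d : ℕ} {μ : Measure Ω}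
  {D : Ω → Matrix (Fin d) (Fin d) ℂ} {F : Ω → ℂ} {lam : ℂ}

theorem memL2M_smul_of_forall_norm_le (hD : ∀ t, (D t).PosSemidef)
    (hDm : ∀ i j, Measurable fun t => D t i j) (hF : Measurable F) {C : ℝ}
    (hC : ∀ lam ∈ essValueSet μ F, ‖lam‖ ≤ C) {f : Ω → Fin d → ℂ} (hf : MemL2M μ D f) :
    MemL2M μ D (fun t => F t • f t) ∧
      quadInt μ D (fun t => F t • f t) ≤ C ^ 2 * quadInt μ D f := by
  have hle : ∀ᵐ t ∂μ, quadForm (D t) (F t • f t) ≤ C ^ 2 * quadForm (D t) (f t) := by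
    filter_upwards [ae_mem_essValueSet] with t ht
    rw [quadForm_smul]
    gcongr
    exacts [quadForm_nonneg (hD t) _, hC _ ht]
  have hFf := memL2M_of_ae_le hD hDm (hF.smul hf.1) (hf.2.const_mul _) hle
  exact ⟨hFf, quadInt_le_mul_of_ae_le hFf hf hle⟩

theorem exists_memL2M_quadInt_pos_of_mem_essValueSet [IsFiniteMeasure μ]
    (hD : ∀ t, (D t).PosSemidef) (hDm : ∀ i j, Measurable fun t => D t i j)
    (hTr : ∀ A, MeasurableSet A → ∑ i, ∫ t in A, (D t i i).re ∂μ = (μ A).toReal)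
    (hF : Measurable F) (hlam : lam ∈ essValueSet μ F) {r : ℝ} (hr : 0 < r) :
    ∃ f, MemL2M μ D f ∧ 0 < quadInt μ D f ∧ ∀ t, r ≤ ‖F t - lam‖ → f t = 0 := by
  obtain ⟨f, hf, hpos, hsupp⟩ := exists_memL2M_quadInt_pos hD hDm hTr
    (hF measurableSet_ball) (hlam _ Metric.isOpen_ball (Metric.mem_ball_self hr))
  refine ⟨f, hf, hpos, fun t ht => hsupp t ?_⟩
  simpa [dist_eq_norm] using ht

theorem norm_le_of_mem_essValueSet [IsFiniteMeasure μ] (hD : ∀ t, (D t).PosSemidef)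
    (hDm : ∀ i j, Measurable fun t => D t i j)
    (hTr : ∀ A, MeasurableSet A → ∑ i, ∫ t in A, (D t i i).re ∂μ = (μ A).toReal)
    (hF : Measurable F) {C : ℝ} (hC : 0 ≤ C)
    (hop : ∀ f : Ω → Fin d → ℂ, MemL2M μ D f →
      MemL2M μ D (fun t => F t • f t) ∧
        quadInt μ D (fun t => F t • f t) ≤ C ^ 2 * quadInt μ D f)
    (hlam : lam ∈ essValueSet μ F) : ‖lam‖ ≤ C := by
  by_contra! hCl
  set m := (‖lam‖ + C) / 2 with hm
  obtain ⟨f, hf, hpos, hsupp⟩ := exists_memL2M_quadInt_pos_of_mem_essValueSet hD hDm hTr hF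
    hlam (r := ‖lam‖ - m) (by linarith)
  obtain ⟨hFf, hup⟩ := hop f hf
  have hlow : m ^ 2 * quadInt μ D f ≤ quadInt μ D (fun t => F t • f t) := by
    refine mul_quadInt_le_of_ae_le hf hFf (ae_of_all _ fun t => ?_)
    by_cases ht : ‖lam‖ - m ≤ ‖F t - lam‖
    · simp [hsupp t ht]
    · have hFt : m ≤ ‖F t‖ := by
        linarith [norm_sub_norm_le lam (F t), norm_sub_rev lam (F t)]
      rw [quadForm_smul]
      gcongr
      exact quadForm_nonneg (hD t) _
  have hCm : C ^ 2 < m ^ 2 := by gcongr; linarith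
  nlinarith [mul_lt_mul_of_pos_right hCm hpos]

theorem opBound_iff_forall_norm_le [IsFiniteMeasure μ] (hD : ∀ t, (D t).PosSemidef)
    (hDm : ∀ i j, Measurable fun t => D t i j)
    (hTr : ∀ A, MeasurableSet A → ∑ i, ∫ t in A, (D t i i).re ∂μ = (μ A).toReal)
    (hF : Measurable F) {C : ℝ} (hC : 0 ≤ C) :
    (∀ f : Ω → Fin d → ℂ, MemL2M μ D f →
      MemL2M μ D (fun t => F t • f t) ∧
        quadInt μ D (fun t => F t • f t) ≤ C ^ 2 * quadInt μ D f) ↔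
      ∀ lam ∈ essValueSet μ F, ‖lam‖ ≤ C :=
  ⟨fun hop _ hlam => norm_le_of_mem_essValueSet hD hDm hTr hF hC hop hlam,
    fun hve _ hf => memL2M_smul_of_forall_norm_le hD hDm hF hve hf⟩

theorem quadInt_le_of_ae_le_norm_sub (hD : ∀ t, (D t).PosSemidef) {ε : ℝ} (hε : 0 < ε)
    (hFε : ∀ᵐ t ∂μ, ε ≤ ‖F t - lam‖)
    {f : Ω → Fin d → ℂ} (hf : MemL2M μ D f) (hFf : MemL2M μ D fun t => (F t - lam) • f t) :
    quadInt μ D f ≤ ε⁻¹ ^ 2 * quadInt μ D (fun t => (F t - lam) • f t) := by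
  refine quadInt_le_mul_of_ae_le hf hFf ?_
  filter_upwards [hFε] with t ht
  rw [quadForm_smul, ← mul_assoc, ← mul_pow]
  refine le_mul_of_one_le_left (quadForm_nonneg (hD t) _) (one_le_pow₀ ?_)
  rwa [le_inv_mul_iff₀ hε, mul_one]

theorem exists_solution_of_ae_le_norm_sub (hD : ∀ t, (D t).PosSemidef)
    (hDm : ∀ i j, Measurable fun t => D t i j) (hF : Measurable F)
    {ε : ℝ} (hε : 0 < ε) (hFε : ∀ᵐ t ∂μ, ε ≤ ‖F t - lam‖) {g : Ω → Fin d → ℂ} (hg : MemL2M μ D g) :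
    ∃ f : Ω → Fin d → ℂ, MemL2M μ D f ∧ MemL2M μ D (fun t => F t • f t) ∧
      quadInt μ D (fun t => (F t - lam) • f t - g t) = 0 := by
  set f : Ω → Fin d → ℂ := fun t => (F t - lam)⁻¹ • g t
  have hsolve : ∀ᵐ t ∂μ, (F t - lam) • f t = g t := by
    filter_upwards [hFε] with t ht
    have hne : F t - lam ≠ 0 := norm_pos_iff.mp (hε.trans_le ht)
    simp [f, smul_smul, hne]
  have hf : MemL2M μ D f := by
    refine memL2M_of_ae_le hD hDm ((hF.sub_const lam).inv.smul hg.1)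
      (hg.2.const_mul (ε⁻¹ ^ 2)) ?_
    filter_upwards [hFε] with t ht
    rw [quadForm_smul, norm_inv]
    gcongr
    exacts [quadForm_nonneg (hD t) _, le_rfl]
  have hFlf : MemL2M μ D fun t => (F t - lam) • f t :=
    memL2M_of_ae_le hD hDm ((hF.sub_const lam).smul hf.1) hg.2
      (hsolve.mono fun t ht => (congrArg (quadForm (D t)) ht).le)
  refine ⟨f, hf, ?_, quadInt_eq_zero_of_ae_eq_zero (hsolve.mono fun t ht => sub_eq_zero.mpr ht)⟩
  simpa only [← add_smul, sub_add_cancel] using hFlf.add hD hDm (hf.const_smul lam)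

theorem notMem_essValueSet_of_quadInt_le [IsFiniteMeasure μ] (hD : ∀ t, (D t).PosSemidef)
    (hDm : ∀ i j, Measurable fun t => D t i j)
    (hTr : ∀ A, MeasurableSet A → ∑ i, ∫ t in A, (D t i i).re ∂μ = (μ A).toReal)
    (hF : Measurable F) {C : ℝ} (hC : 0 ≤ C)
    (hbdd : ∀ f : Ω → Fin d → ℂ, MemL2M μ D f → MemL2M μ D (fun t => (F t - lam) • f t) →
      quadInt μ D f ≤ C * quadInt μ D (fun t => (F t - lam) • f t)) :
    lam ∉ essValueSet μ F := by
  intro hlam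
  set ε := (C + 1)⁻¹ with hε
  have hε0 : 0 < ε := by positivity
  have hCε : C * ε ^ 2 < 1 := by
    rw [hε, inv_pow, ← div_eq_mul_inv, div_lt_one (by positivity)]
    nlinarith
  obtain ⟨f, hf, hpos, hsupp⟩ :=
    exists_memL2M_quadInt_pos_of_mem_essValueSet hD hDm hTr hF hlam hε0
  have hle : ∀ t, quadForm (D t) ((F t - lam) • f t) ≤ ε ^ 2 * quadForm (D t) (f t) := by
    intro t
    by_cases ht : ε ≤ ‖F t - lam‖
    · simp [hsupp t ht]
    · rw [quadForm_smul]
      gcongr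
      exacts [quadForm_nonneg (hD t) _, (not_le.mp ht).le]
  have hFf := memL2M_of_ae_le hD hDm ((hF.sub_const lam).smul hf.1) (hf.2.const_mul _)
    (ae_of_all _ hle)
  have := (hbdd f hf hFf).trans
    (mul_le_mul_of_nonneg_left (quadInt_le_mul_of_ae_le hFf hf (ae_of_all _ hle)) hC)
  nlinarith

theorem exists_eigenvector_of_measure_preimage_ne_zero [IsFiniteMeasure μ]
    (hD : ∀ t, (D t).PosSemidef) (hDm : ∀ i j, Measurable fun t => D t i j)
    (hTr : ∀ A, MeasurableSet A → ∑ i, ∫ t in A, (D t i i).re ∂μ = (μ A).toReal)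
    (hF : Measurable F) (hlam : μ (F ⁻¹' {lam}) ≠ 0) :
    ∃ f : Ω → Fin d → ℂ, MemL2M μ D f ∧ quadInt μ D f ≠ 0 ∧
      MemL2M μ D (fun t => F t • f t) ∧ quadInt μ D (fun t => (F t - lam) • f t) = 0 := by
  obtain ⟨f, hf, hpos, hsupp⟩ :=
    exists_memL2M_quadInt_pos hD hDm hTr (hF (measurableSet_singleton lam)) hlam
  have heig : ∀ t, F t • f t = lam • f t := fun t => by
    by_cases ht : F t = lam
    · rw [ht]
    · rw [hsupp t ht, smul_zero, smul_zero]
  refine ⟨f, hf, hpos.ne', ?_, quadInt_eq_zero_of_ae_eq_zero (ae_of_all _ fun t => ?_)⟩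
  · simpa only [heig] using hf.const_smul lam
  · rw [sub_smul, heig, sub_self]

theorem quadInt_eq_zero_of_eigenvector (hD : ∀ t, (D t).PosSemidef)
    (hDm : ∀ i j, Measurable fun t => D t i j) (hlam : μ (F ⁻¹' {lam}) = 0)
    {f : Ω → Fin d → ℂ} (hf : MemL2M μ D f) (hFf : MemL2M μ D fun t => F t • f t)
    (heig : quadInt μ D (fun t => (F t - lam) • f t) = 0) : quadInt μ D f = 0 := by
  have hFlf : MemL2M μ D fun t => (F t - lam) • f t := by
    simpa only [sub_eq_add_neg, add_smul, neg_smul] using hFf.add hD hDm (hf.const_smul (-lam))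
  have hne : ∀ᵐ t ∂μ, F t ≠ lam := measure_mono_null (fun t ht => not_not.mp ht) hlam
  refine integral_eq_zero_of_ae ?_
  filter_upwards [ae_quadForm_eq_zero_of_quadInt_eq_zero hD hFlf heig, hne] with t ht hne
  rw [quadForm_smul] at ht
  exact (mul_eq_zero.mp ht).resolve_left (by simpa [sub_eq_zero] using hne)

end MultiplicationOperator

end MatrixMeasure

open MatrixMeasure in
theorem spectrum_of_multiplication_operator_general
    {Ω : Type*} [MeasurableSpace Ω] {d : ℕ}
    (M : Set Ω → Matrix (Fin d) (Fin d) ℂ)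
    (μ : Measure Ω) [IsFiniteMeasure μ]
    (D : Ω → Matrix (Fin d) (Fin d) ℂ)
    (hμ : ∀ ω : Set Ω, MeasurableSet ω → (M ω).trace = ((μ ω).toReal : ℂ))
    (hDmeas : ∀ i j, Measurable fun t => D t i j)
    (hDpos : ∀ t, (D t).PosSemidef)
    (hden : ∀ ω : Set Ω, MeasurableSet ω → ∀ i j, M ω i j = ∫ t in ω, D t i j ∂μ)
    (F : Ω → ℂ) (hF : Measurable F) :
    -- σ(T_F) = VE_{tr_M}(F): λ is in the resolvent set of T_F iff λ ∉ VE_{tr_M}(F)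
    (∀ lam : ℂ,
      (lam ∉ essValueSet μ F) ↔
        ((∃ C : ℝ, 0 ≤ C ∧ ∀ f : Ω → Fin d → ℂ, MemL2M μ D f →
            MemL2M μ D (fun t => (F t - lam) • f t) →
            quadInt μ D f ≤ C * quadInt μ D (fun t => (F t - lam) • f t)) ∧
         (∀ g : Ω → Fin d → ℂ, MemL2M μ D g →
            ∃ f : Ω → Fin d → ℂ, MemL2M μ D f ∧
              MemL2M μ D (fun t => F t • f t) ∧
              quadInt μ D (fun t => (F t - lam) • f t - g t) = 0))) ∧
    -- σ_p(T_F) = {λ : tr_M (F⁻¹{λ}) ≠ 0}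
    (∀ lam : ℂ,
      (μ (F ⁻¹' {lam}) ≠ 0) ↔
        ∃ f : Ω → Fin d → ℂ, MemL2M μ D f ∧ quadInt μ D f ≠ 0 ∧
          MemL2M μ D (fun t => F t • f t) ∧
          quadInt μ D (fun t => (F t - lam) • f t) = 0) ∧
    -- T_F is bounded iff VE_{tr_M}(F) is bounded
    ((∃ C : ℝ, 0 ≤ C ∧ ∀ f : Ω → Fin d → ℂ, MemL2M μ D f →
        MemL2M μ D (fun t => F t • f t) ∧
          quadInt μ D (fun t => F t • f t) ≤ C ^ 2 * quadInt μ D f) ↔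
      Bornology.IsBounded (essValueSet μ F)) ∧
    -- ‖T_F‖ = sup |VE_{tr_M}(F)|: C ≥ 0 is an operator bound for T_F iff it bounds |VE|
    (∀ C : ℝ, 0 ≤ C →
      ((∀ f : Ω → Fin d → ℂ, MemL2M μ D f →
          MemL2M μ D (fun t => F t • f t) ∧
            quadInt μ D (fun t => F t • f t) ≤ C ^ 2 * quadInt μ D f) ↔
        ∀ lam ∈ essValueSet μ F, ‖lam‖ ≤ C)) := by
  have hTr : ∀ A, MeasurableSet A → ∑ i, ∫ t in A, (D t i i).re ∂μ = (μ A).toReal :=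
    fun A hA => sum_setIntegral_re_diag M hμ hDpos hden hA
  have hop := fun C (hC : 0 ≤ C) => opBound_iff_forall_norm_le hDpos hDmeas hTr hF hC
  refine ⟨fun lam => ⟨fun hlam => ?_, fun ⟨⟨C, hC, hbdd⟩, _⟩ =>
      notMem_essValueSet_of_quadInt_le hDpos hDmeas hTr hF hC hbdd⟩,
    fun lam => ⟨exists_eigenvector_of_measure_preimage_ne_zero hDpos hDmeas hTr hF,
      fun ⟨f, hf, hfne, hFf, heig⟩ hlam =>
        hfne (quadInt_eq_zero_of_eigenvector hDpos hDmeas hlam hf hFf heig)⟩, ?_, hop⟩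
  · obtain ⟨ε, hε, hFε⟩ := exists_pos_ae_le_norm_sub_of_notMem_essValueSet hlam
    exact ⟨⟨ε⁻¹ ^ 2, by positivity, fun f => quadInt_le_of_ae_le_norm_sub hDpos hε hFε⟩,
      fun g => exists_solution_of_ae_le_norm_sub hDpos hDmeas hF hε hFε⟩
  · rw [isBounded_iff_forall_norm_le]
    refine ⟨fun ⟨C, hC, hbdd⟩ => ⟨C, (hop C hC).1 hbdd⟩, fun ⟨C, hC⟩ => ?_⟩
    exact ⟨max C 0, le_max_right C 0,
      (hop _ (le_max_right C 0)).2 fun lam hlam => (hC lam hlam).trans (le_max_left C 0)⟩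

/-- For a matrix measure `M` with `L²(M) ≠ {0}` (equivalently, trace measure
`μ = tr_M ≠ 0`), the multiplication operator `T_F` on `L²(M)` has:
`σ(T_F) = VE_{tr_M}(F)` — i.e. `λ ∉ VE_{tr_M}(F)` iff `T_F - λ` has a (bounded, everywhere
defined) inverse; point spectrum `σ_p(T_F) = {λ : tr_M(F⁻¹{λ}) ≠ 0}`; `T_F` is bounded iff
`VE_{tr_M}(F)` is bounded, and then `‖T_F‖ = sup {|λ| : λ ∈ VE_{tr_M}(F)}` — expressed by:
the nonnegative operator bounds `C` for `T_F` are exactly the upper bounds of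
`{|λ| : λ ∈ VE_{tr_M}(F)}`. Everything is phrased on representatives modulo the zero
layer (seminorm `quadInt`). -/
theorem spectrum_of_multiplication_operator
    {Ω : Type*} [MeasurableSpace Ω] {d : ℕ}
    (M : Set Ω → Matrix (Fin d) (Fin d) ℂ)
    (μ : Measure Ω) [IsFiniteMeasure μ]
    (D : Ω → Matrix (Fin d) (Fin d) ℂ)
    (hpos : ∀ ω : Set Ω, MeasurableSet ω → (M ω).PosSemidef)
    (hμ : ∀ ω : Set Ω, MeasurableSet ω → (M ω).trace = ((μ ω).toReal : ℂ))
    (hDmeas : ∀ i j, Measurable fun t => D t i j)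
    (hDpos : ∀ t, (D t).PosSemidef)
    (hden : ∀ ω : Set Ω, MeasurableSet ω → ∀ i j, M ω i j = ∫ t in ω, D t i j ∂μ)
    (hne : μ ≠ 0)  -- L²(M) ≠ {0}
    (F : Ω → ℂ) (hF : Measurable F) :
    -- σ(T_F) = VE_{tr_M}(F): λ is in the resolvent set of T_F iff λ ∉ VE_{tr_M}(F)
    (∀ lam : ℂ,
      (lam ∉ essValueSet μ F) ↔
        ((∃ C : ℝ, 0 ≤ C ∧ ∀ f : Ω → Fin d → ℂ, MemL2M μ D f →
            MemL2M μ D (fun t => (F t - lam) • f t) →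
            quadInt μ D f ≤ C * quadInt μ D (fun t => (F t - lam) • f t)) ∧
         (∀ g : Ω → Fin d → ℂ, MemL2M μ D g →
            ∃ f : Ω → Fin d → ℂ, MemL2M μ D f ∧
              MemL2M μ D (fun t => F t • f t) ∧
              quadInt μ D (fun t => (F t - lam) • f t - g t) = 0))) ∧
    -- σ_p(T_F) = {λ : tr_M (F⁻¹{λ}) ≠ 0}
    (∀ lam : ℂ,
      (μ (F ⁻¹' {lam}) ≠ 0) ↔
        ∃ f : Ω → Fin d → ℂ, MemL2M μ D f ∧ quadInt μ D f ≠ 0 ∧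
          MemL2M μ D (fun t => F t • f t) ∧
          quadInt μ D (fun t => (F t - lam) • f t) = 0) ∧
    -- T_F is bounded iff VE_{tr_M}(F) is bounded
    ((∃ C : ℝ, 0 ≤ C ∧ ∀ f : Ω → Fin d → ℂ, MemL2M μ D f →
        MemL2M μ D (fun t => F t • f t) ∧
          quadInt μ D (fun t => F t • f t) ≤ C ^ 2 * quadInt μ D f) ↔
      Bornology.IsBounded (essValueSet μ F)) ∧
    -- ‖T_F‖ = sup |VE_{tr_M}(F)|: C ≥ 0 is an operator bound for T_F iff it bounds |VE|
    (∀ C : ℝ, 0 ≤ C →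
      ((∀ f : Ω → Fin d → ℂ, MemL2M μ D f →
          MemL2M μ D (fun t => F t • f t) ∧
            quadInt μ D (fun t => F t • f t) ≤ C ^ 2 * quadInt μ D f) ↔
        ∀ lam ∈ essValueSet μ F, ‖lam‖ ≤ C)) :=
  spectrum_of_multiplication_operator_general M μ D hμ hDmeas hDpos hden F hF
end
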